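/- arXiv:2508.06927 — 4 statements merged into one kernel-verified Lean document; each statement's English description precedes it below -/
import Mathlib

section
/- (Theorem 3.1(i)) Suppose RCRCQ holds at x̄ ∈ Γ. Then there exists an open neighborhood U of x̄ such that for every x ∈ Γ ∩ U, every x* ∈ ℝⁿ, and every v ∈ ℝⁿ satisfying ⟨∇q_i(x), v⟩ = 0 for all i ∈ E ∪ I⁺(x, x*), the value ⟨v, ∇²⟨λ, q⟩(x) v⟩ is the same for all λ ∈ Λ(x, x*); consequently Λ(x, x*; v) = Λ(x, x*). -/
open Filter Topology Metric Set
open scoped RealInnerProductSpace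

noncomputable section

/-- The Bouligand (contingent) tangent cone to `s` at `x`. -/
def BCone {V : Type*} [NormedAddCommGroup V] [NormedSpace ℝ V] (s : Set V) (x : V) : Set V :=
  {u | ∃ (t : ℕ → ℝ) (c : ℕ → V), (∀ k, 0 < t k) ∧ Filter.Tendsto t Filter.atTop (𝓝 0) ∧
    Filter.Tendsto c Filter.atTop (𝓝 u) ∧ ∀ k, x + t k • c k ∈ s}

/-- The (convex) normal cone to `K` at `w`; empty when `w ∉ K`. -/
def NCone {V : Type*} [NormedAddCommGroup V] [InnerProductSpace ℝ V] (K : Set V) (w : V) :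
    Set V :=
  {z | w ∈ K ∧ ∀ y ∈ K, ⟪z, y - w⟫ ≤ 0}

variable {n : ℕ} {ι : Type*} [Fintype ι] [DecidableEq ι]

/-- The feasible set `Γ` of the nonlinear program. -/
def Feas (E I : Finset ι) (q : ι → EuclideanSpace ℝ (Fin n) → ℝ) :
    Set (EuclideanSpace ℝ (Fin n)) :=
  {x | (∀ i ∈ E, q i x = 0) ∧ ∀ i ∈ I, q i x ≤ 0}

/-- The set of active inequality constraints at `x`. -/
def ActiveI (I : Finset ι) (q : ι → EuclideanSpace ℝ (Fin n) → ℝ)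
    (x : EuclideanSpace ℝ (Fin n)) : Finset ι :=
  I.filter fun i => q i x = 0

/-- The Lagrange multiplier set `Λ(x, x*)`. -/
def Mult (I : Finset ι) (q : ι → EuclideanSpace ℝ (Fin n) → ℝ)
    (x xs : EuclideanSpace ℝ (Fin n)) : Set (EuclideanSpace ℝ ι) :=
  {lam | ∑ i, lam i • gradient (q i) x = xs ∧ ∀ i ∈ I, 0 ≤ lam i ∧ lam i * q i x = 0}

/-- `I⁺(λ)`: the inequality indices with positive multiplier. -/
def IplusF (I : Finset ι) (lam : EuclideanSpace ℝ ι) : Finset ι :=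
  I.filter fun i => 0 < lam i

/-- `I⁺(x, x*) = ∪_{λ ∈ Λ(x,x*)} I⁺(λ)`. -/
def IplusSet (I : Finset ι) (q : ι → EuclideanSpace ℝ (Fin n) → ℝ)
    (x xs : EuclideanSpace ℝ (Fin n)) : Set ι :=
  {i | ∃ lam ∈ Mult I q x xs, i ∈ IplusF I lam}

/-- Rank of the family of gradients `{∇q_i(x) : i ∈ s}`. -/
def RankAt (q : ι → EuclideanSpace ℝ (Fin n) → ℝ) (s : Finset ι)
    (x : EuclideanSpace ℝ (Fin n)) : ℕ :=
  Module.finrank ℝ (Submodule.span ℝ ((fun i => gradient (q i) x) '' ↑s))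

/-- The relaxed constant rank constraint qualification at `xbar`. -/
def RCRCQat (E I : Finset ι) (q : ι → EuclideanSpace ℝ (Fin n) → ℝ)
    (xbar : EuclideanSpace ℝ (Fin n)) : Prop :=
  ∃ U ∈ 𝓝 xbar, ∀ J ⊆ ActiveI I q xbar, ∀ x ∈ U, ∀ y ∈ U,
    RankAt q (E ∪ J) x = RankAt q (E ∪ J) y

/-- The set `Θ = {0}^E × ℝ₋^I`. -/
def Theta (E I : Finset ι) : Set (EuclideanSpace ℝ ι) :=
  {y | (∀ i ∈ E, y i = 0) ∧ ∀ i ∈ I, y i ≤ 0}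

/-- The metric subregularity constraint qualification at `x` with modulus `κ`. -/
def MSCQat (E I : Finset ι) (q : ι → EuclideanSpace ℝ (Fin n) → ℝ)
    (x : EuclideanSpace ℝ (Fin n)) (κ : ℝ) : Prop :=
  ∃ U ∈ 𝓝 x, ∀ u ∈ U,
    Metric.infDist u (Feas E I q) ≤
      κ * Metric.infDist (show EuclideanSpace ℝ ι from WithLp.toLp 2 fun i => q i u) (Theta E I)

/-- The critical cone `K(x, x*) = T_Γ(x) ∩ {x*}^⊥`. -/
def Crit (E I : Finset ι) (q : ι → EuclideanSpace ℝ (Fin n) → ℝ)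
    (x xs : EuclideanSpace ℝ (Fin n)) : Set (EuclideanSpace ℝ (Fin n)) :=
  BCone (Feas E I q) x ∩ {v | ⟪xs, v⟫ = 0}

/-- Hessian of `f` at `x` applied to `w` (derivative of the gradient map). -/
def HessApp (f : EuclideanSpace ℝ (Fin n) → ℝ) (x w : EuclideanSpace ℝ (Fin n)) :
    EuclideanSpace ℝ (Fin n) :=
  fderiv ℝ (fun y => gradient f y) x w

/-- `∇²⟨λ, q⟩(x) w = Σ_i λ_i ∇²q_i(x) w`. -/
def HessComb (q : ι → EuclideanSpace ℝ (Fin n) → ℝ) (lam : EuclideanSpace ℝ ι)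
    (x w : EuclideanSpace ℝ (Fin n)) : EuclideanSpace ℝ (Fin n) :=
  ∑ i, lam i • HessApp (q i) x w

/-- The quadratic form `⟨v, ∇²⟨λ,q⟩(x) v⟩`. -/
def QuadComb (q : ι → EuclideanSpace ℝ (Fin n) → ℝ) (lam : EuclideanSpace ℝ ι)
    (x v : EuclideanSpace ℝ (Fin n)) : ℝ :=
  ⟪v, HessComb q lam x v⟫

/-- `Λ(x, x*; v)`: the argmax of the quadratic form over `Λ(x, x*)`. -/
def MultArgmax (I : Finset ι) (q : ι → EuclideanSpace ℝ (Fin n) → ℝ)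
    (x xs v : EuclideanSpace ℝ (Fin n)) : Set (EuclideanSpace ℝ ι) :=
  {lam ∈ Mult I q x xs | ∀ mu ∈ Mult I q x xs, QuadComb q mu x v ≤ QuadComb q lam x v}

/-- The set `G = {(u, u*) : u ∈ Γ, Λ(u, u*) ≠ ∅}`. -/
def GSet (E I : Finset ι) (q : ι → EuclideanSpace ℝ (Fin n) → ℝ) :
    Set (EuclideanSpace ℝ (Fin n) × EuclideanSpace ℝ (Fin n)) :=
  {p | p.1 ∈ Feas E I q ∧ (Mult I q p.1 p.2).Nonempty}

/-- Argmin set of the tilted problem `M_γ(v)`. -/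
def MArgmin (φ : EuclideanSpace ℝ (Fin n) → ℝ) (Γ : Set (EuclideanSpace ℝ (Fin n)))
    (xbar : EuclideanSpace ℝ (Fin n)) (γ : ℝ) (v : EuclideanSpace ℝ (Fin n)) :
    Set (EuclideanSpace ℝ (Fin n)) :=
  {x ∈ Γ ∩ Metric.closedBall xbar γ |
    ∀ y ∈ Γ ∩ Metric.closedBall xbar γ, φ x - ⟪v, x⟫ ≤ φ y - ⟪v, y⟫}

/-- Tilt-stable local minimizer with modulus `κ`. -/
def TiltStableWith (φ : EuclideanSpace ℝ (Fin n) → ℝ) (Γ : Set (EuclideanSpace ℝ (Fin n)))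
    (xbar : EuclideanSpace ℝ (Fin n)) (κ : ℝ) : Prop :=
  ∃ γ > (0:ℝ), ∃ W ∈ 𝓝 (0 : EuclideanSpace ℝ (Fin n)),
    ∃ m : EuclideanSpace ℝ (Fin n) → EuclideanSpace ℝ (Fin n),
      m 0 = xbar ∧ (∀ v ∈ W, MArgmin φ Γ xbar γ v = {m v}) ∧
      ∀ v₁ ∈ W, ∀ v₂ ∈ W, ‖m v₁ - m v₂‖ ≤ κ * ‖v₁ - v₂‖

/-- Tilt-stable local minimizer. -/
def TiltStable (φ : EuclideanSpace ℝ (Fin n) → ℝ) (Γ : Set (EuclideanSpace ℝ (Fin n)))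
    (xbar : EuclideanSpace ℝ (Fin n)) : Prop :=
  ∃ κ > (0:ℝ), TiltStableWith φ Γ xbar κ

/-- The exact bound of tilt stability. -/
def TiltBound (φ : EuclideanSpace ℝ (Fin n) → ℝ) (Γ : Set (EuclideanSpace ℝ (Fin n)))
    (xbar : EuclideanSpace ℝ (Fin n)) : ℝ :=
  sInf {κ : ℝ | 0 < κ ∧ TiltStableWith φ Γ xbar κ}

/-!
Two multipliers of `x*` at a point `x` near `x̄` differ by a vector `μ` supported on `E ∪ J`, where
the constraints in `J` are active at `x`, hence at `x̄`, so RCRCQ keeps the rank of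
`{∇qᵢ : i ∈ E ∪ J}` constant near `x`; and `F = ∑ μᵢ ∇qᵢ` vanishes at `x`. Near `x` a fixed basis
of `span {∇qᵢ(x) : i ∈ E ∪ J}` stays a basis of `span {∇qᵢ(y)}`, with coefficients of `F(y)` of
size `O(‖F(y)‖) = O(‖y - x‖)`. Any functional killing the `∇qᵢ(x)` is then `o(‖y - x‖)` on `F(y)`,
so `∇F(x) = ∑ μᵢ ∇²qᵢ(x)` maps into that span, which is orthogonal to the critical direction `v`.
-/

open Filter Topology Set Module Submodule Asymptotics

theorem LinearIndependent.exists_eventually_norm_le_mul_norm_sum {𝕜 E ι : Type*}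
    [NontriviallyNormedField 𝕜] [CompleteSpace 𝕜] [NormedAddCommGroup E] [NormedSpace 𝕜 E]
    [Fintype ι] {f : ι → E} (hf : LinearIndependent 𝕜 f) :
    ∃ C : ℝ, ∀ᶠ g in 𝓝 f, ∀ c : ι → 𝕜, ‖c‖ ≤ C * ‖∑ i, c i • g i‖ := by
  obtain ⟨K, hK0, hK⟩ := (Fintype.linearCombination 𝕜 f).exists_antilipschitzWith
    (LinearMap.ker_eq_bot.2 hf.fintypeLinearCombination_injective)
  have hKf : ∀ c : ι → 𝕜, ‖c‖ ≤ K * ‖∑ i, c i • f i‖ := fun c => by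
    simpa [Fintype.linearCombination_apply] using hK.le_mul_norm_sub 0 c
  have hclose : Tendsto (fun g : ι → E => ∑ i, ‖g i - f i‖) (𝓝 f) (𝓝 0) := by
    simpa using tendsto_finsetSum (Finset.univ : Finset ι) fun i _ =>
      (((continuous_apply i).tendsto f).sub (tendsto_const_nhds (x := f i))).norm
  have hK2 : (K : ℝ) * (2 * (K : ℝ))⁻¹ = 1 / 2 := by
    have : (K : ℝ) ≠ 0 := by positivity
    field_simp
  refine ⟨2 * K, ?_⟩
  filter_upwards [hclose.eventually (ge_mem_nhds (show (0 : ℝ) < (2 * (K : ℝ))⁻¹ by positivity))]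
    with g hg c
  have hsplit : ∑ i, c i • f i = ∑ i, c i • g i + ∑ i, c i • (f i - g i) := by
    simp [smul_sub, Finset.sum_sub_distrib]
  have hdiff : ‖∑ i, c i • (f i - g i)‖ ≤ ‖c‖ * (2 * (K : ℝ))⁻¹ := by
    refine le_trans ?_ (mul_le_mul_of_nonneg_left hg (norm_nonneg c))
    rw [Finset.mul_sum]
    refine norm_sum_le_of_le _ fun i _ => ?_
    rw [norm_smul, norm_sub_rev]
    gcongr
    exact norm_le_pi_norm c i
  have : ‖c‖ ≤ K * ‖∑ i, c i • g i‖ + ‖c‖ / 2 := calc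
    ‖c‖ ≤ K * (‖∑ i, c i • g i‖ + ‖c‖ * (2 * (K : ℝ))⁻¹) := by
        refine (hKf c).trans (mul_le_mul_of_nonneg_left ?_ K.2)
        rw [hsplit]
        exact (norm_add_le _ _).trans (by linarith)
    _ = K * ‖∑ i, c i • g i‖ + ‖c‖ / 2 := by rw [mul_add, mul_left_comm, hK2]; ring
  linarith

theorem exists_eventually_norm_map_le_of_finrank_span_le {κ X F G : Type*} [TopologicalSpace X]
    [NormedAddCommGroup F] [NormedSpace ℝ F] [NormedAddCommGroup G] [NormedSpace ℝ G]
    {g : κ → X → F} {S : Finset κ} {x : X} (hg : ∀ i ∈ S, ContinuousAt (g i) x)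
    (hrank : ∀ᶠ y in 𝓝 x,
      finrank ℝ (span ℝ ((g · y) '' S)) ≤ finrank ℝ (span ℝ ((g · x) '' S))) :
    ∃ T ⊆ S, ∃ C : ℝ, ∀ᶠ y in 𝓝 x, ∀ u ∈ span ℝ ((g · y) '' S), ∀ φ : F →ₗ[ℝ] G,
      ‖φ u‖ ≤ C * ‖u‖ * ∑ i ∈ T, ‖φ (g i y)‖ := by
  obtain ⟨b, hbS, -, hspan, hli⟩ :=
    exists_linearIndepOn_extension (linearIndepOn_empty ℝ (g · x)) (empty_subset (S : Set κ))
  have hb : b.Finite := S.finite_toSet.subset hbS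
  set T := hb.toFinset
  have hTb : (T : Set κ) = b := hb.coe_toFinset
  have hrange : ∀ y, (g · y) '' T = range fun i : T => g i y := fun y => image_eq_range _ _
  have hliT : LinearIndependent ℝ fun i : T => g i x := by
    rw [← hTb] at hli
    exact hli.linearIndependent
  have hTS : T ⊆ S := fun i hi => hbS (hb.mem_toFinset.1 hi)
  have hrank_x : finrank ℝ (span ℝ ((g · x) '' S)) = Fintype.card T := by
    rw [← finrank_span_eq_card hliT, ← hrange, hTb,
      le_antisymm (span_le.2 hspan) (span_mono (image_mono hbS))]
  obtain ⟨C, hC⟩ := hliT.exists_eventually_norm_le_mul_norm_sum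
  have htend : Tendsto (fun y (i : T) => g i y) (𝓝 x) (𝓝 fun i : T => g i x) :=
    tendsto_pi_nhds.2 fun i => hg i (hTS i.2)
  refine ⟨T, hTS, C, ?_⟩
  filter_upwards [htend.eventually hC, hrank] with y hCy hrank_y u hu φ
  have hliy : LinearIndependent ℝ fun i : T => g i y :=
    Fintype.linearIndependent_iff.2 fun c hc i => norm_le_zero_iff.1 <|
      (norm_le_pi_norm c i).trans ((hCy c).trans_eq (by rw [hc, norm_zero, mul_zero]))
  have := FiniteDimensional.span_of_finite ℝ (S.finite_toSet.image (g · y))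
  have hspan_y : span ℝ (range fun i : T => g i y) = span ℝ ((g · y) '' S) :=
    eq_of_le_of_finrank_le (span_mono (hrange y ▸ image_mono (Finset.coe_subset.2 hTS)))
      (by rw [finrank_span_eq_card hliy, ← hrank_x]; exact hrank_y)
  rw [← hspan_y] at hu
  obtain ⟨c, rfl⟩ := (mem_span_range_iff_exists_fun ℝ).1 hu
  calc ‖φ (∑ i, c i • g i y)‖ ≤ ∑ i : T, ‖c‖ * ‖φ (g i y)‖ := by
        rw [map_sum]
        refine norm_sum_le_of_le _ fun i _ => ?_
        rw [map_smul, norm_smul]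
        gcongr
        exact norm_le_pi_norm c i
    _ ≤ C * ‖∑ i, c i • g i y‖ * ∑ i ∈ T, ‖φ (g i y)‖ := by
        rw [← Finset.mul_sum, Finset.sum_coe_sort T fun i => ‖φ (g i y)‖]
        gcongr
        exact hCy c

theorem comp_fderiv_sum_eq_zero_of_finrank_span_le {κ E F G : Type*}
    [NormedAddCommGroup E] [NormedSpace ℝ E] [NormedAddCommGroup F] [NormedSpace ℝ F]
    [NormedAddCommGroup G] [NormedSpace ℝ G]
    {g : κ → E → F} {S : Finset κ} {x : E} (hg : ∀ i ∈ S, DifferentiableAt ℝ (g i) x)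
    (hrank : ∀ᶠ y in 𝓝 x,
      finrank ℝ (span ℝ ((g · y) '' S)) ≤ finrank ℝ (span ℝ ((g · x) '' S)))
    {μ : κ → ℝ} (hμ : ∑ i ∈ S, μ i • g i x = 0) (φ : F →L[ℝ] G) (hφ : ∀ i ∈ S, φ (g i x) = 0) :
    φ.comp (∑ i ∈ S, μ i • fderiv ℝ (g i) x) = 0 := by
  set Φ := fun y => ∑ i ∈ S, μ i • g i y
  have hΦ : HasFDerivAt Φ (∑ i ∈ S, μ i • fderiv ℝ (g i) x) x :=
    HasFDerivAt.fun_sum fun i hi => (hg i hi).hasFDerivAt.const_smul (μ i)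
  have hΦ_mem : ∀ y, Φ y ∈ span ℝ ((g · y) '' S) := fun y =>
    sum_mem fun i hi => smul_mem _ _ (subset_span (mem_image_of_mem _ hi))
  have hΦ_O : (fun y => ‖Φ y‖) =O[𝓝 x] fun y => ‖y - x‖ := by
    simpa [Φ, hμ] using hΦ.isBigO_sub.norm_left.norm_right
  obtain ⟨T, hTS, C, hC⟩ := exists_eventually_norm_map_le_of_finrank_span_le (G := G)
    (fun i hi => (hg i hi).continuousAt) hrank
  have hT_small : (fun y => ∑ i ∈ T, ‖φ (g i y)‖) =o[𝓝 x] fun _ => (1 : ℝ) := by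
    rw [isLittleO_one_iff]
    have h0 : ∑ i ∈ T, ‖φ (g i x)‖ = 0 := Finset.sum_eq_zero fun i hi => by simp [hφ i (hTS hi)]
    exact h0 ▸ tendsto_finsetSum T fun i hi =>
      ((φ.continuous.tendsto _).comp (hg i (hTS hi)).continuousAt).norm
  have hφΦ : (fun y => φ (Φ y)) =o[𝓝 x] fun y => y - x := by
    refine isLittleO_norm_right.1 ?_
    refine (IsBigO.of_bound C ?_).trans_isLittleO (by simpa using hΦ_O.mul_isLittleO hT_small)
    filter_upwards [hC] with y hy
    rw [Real.norm_eq_abs, abs_mul, abs_norm, abs_of_nonneg (by positivity), ← mul_assoc]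
    exact hy (Φ y) (hΦ_mem y) φ
  have hzero : HasFDerivAt (fun y => φ (Φ y)) (0 : E →L[ℝ] G) x := by
    rw [hasFDerivAt_iff_isLittleO]
    simpa [Φ, hμ] using hφΦ
  exact (φ.hasFDerivAt.comp x hΦ).unique hzero

theorem sum_smul_fderiv_apply_mem_span_of_finrank_span_le {κ E F : Type*}
    [NormedAddCommGroup E] [NormedSpace ℝ E] [NormedAddCommGroup F] [InnerProductSpace ℝ F]
    {g : κ → E → F} {S : Finset κ} {x : E} (hg : ∀ i ∈ S, DifferentiableAt ℝ (g i) x)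
    (hrank : ∀ᶠ y in 𝓝 x,
      finrank ℝ (span ℝ ((g · y) '' S)) ≤ finrank ℝ (span ℝ ((g · x) '' S)))
    {μ : κ → ℝ} (hμ : ∑ i ∈ S, μ i • g i x = 0) (v : E) :
    ∑ i ∈ S, μ i • fderiv ℝ (g i) x v ∈ span ℝ ((g · x) '' S) := by
  set K := span ℝ ((g · x) '' S)
  have : FiniteDimensional ℝ K := FiniteDimensional.span_of_finite ℝ (S.finite_toSet.image _)
  rw [← K.orthogonal_orthogonal, mem_orthogonal]
  intro w hw
  have h := comp_fderiv_sum_eq_zero_of_finrank_span_le hg hrank hμ (innerSL ℝ w) fun i hi => by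
    rw [innerSL_apply_apply]
    exact inner_left_of_mem_orthogonal (K := K) (subset_span (mem_image_of_mem _ hi)) hw
  simpa [inner_sum, inner_smul_right] using congr($h v)

theorem ContDiff.differentiable_gradient {F : Type*} [NormedAddCommGroup F]
    [InnerProductSpace ℝ F] [CompleteSpace F] {f : F → ℝ} (hf : ContDiff ℝ 2 f) :
    Differentiable ℝ (gradient f) :=
  (InnerProductSpace.toDual ℝ F).symm.differentiable.comp
    ((hf.fderiv_right (m := 1) (by norm_num)).differentiable one_ne_zero)

theorem eventually_activeI_subset {n : ℕ} {ι : Type*} {I : Finset ι}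
    {q : ι → EuclideanSpace ℝ (Fin n) → ℝ} {xbar : EuclideanSpace ℝ (Fin n)}
    (hq : ∀ i ∈ I, ContinuousAt (q i) xbar) : ∀ᶠ x in 𝓝 xbar, ActiveI I q x ⊆ ActiveI I q xbar := by
  have h : ∀ i ∈ I, ∀ᶠ x in 𝓝 xbar, q i x = 0 → q i xbar = 0 := fun i hi => by
    by_cases h0 : q i xbar = 0
    · exact Eventually.of_forall fun _ _ => h0
    · exact ((hq i hi).eventually_ne h0).mono fun _ hx h => absurd h hx
  filter_upwards [(eventually_all_finset I).2 h] with x hx i hi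
  have ⟨hiI, hqi⟩ := Finset.mem_filter.1 hi
  exact Finset.mem_filter.2 ⟨hiI, hx i hiI hqi⟩

section Multipliers

variable {n : ℕ} {ι : Type*} [Fintype ι] {I : Finset ι} {q : ι → EuclideanSpace ℝ (Fin n) → ℝ}
  {x xs : EuclideanSpace ℝ (Fin n)} {lam₁ lam₂ : EuclideanSpace ℝ ι}

theorem eq_zero_of_mem_mult_of_ne (h₁ : lam₁ ∈ Mult I q x xs) (h₂ : lam₂ ∈ Mult I q x xs)
    {i : ι} (hi : i ∈ I) (hne : lam₁ i ≠ lam₂ i) : q i x = 0 := by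
  by_contra hqi
  have e₁ := ((mul_eq_zero.1 (h₁.2 i hi).2).resolve_right hqi)
  have e₂ := ((mul_eq_zero.1 (h₂.2 i hi).2).resolve_right hqi)
  exact hne (e₁.trans e₂.symm)

theorem mem_iplusSet_of_mem_mult_of_ne (h₁ : lam₁ ∈ Mult I q x xs) (h₂ : lam₂ ∈ Mult I q x xs)
    {i : ι} (hi : i ∈ I) (hne : lam₁ i ≠ lam₂ i) : i ∈ IplusSet I q x xs := by
  rcases hne.lt_or_gt with hlt | hgt
  · exact ⟨lam₂, h₂, Finset.mem_filter.2 ⟨hi, (h₁.2 i hi).1.trans_lt hlt⟩⟩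
  · exact ⟨lam₁, h₁, Finset.mem_filter.2 ⟨hi, (h₂.2 i hi).1.trans_lt hgt⟩⟩

theorem sum_sub_smul_gradient_eq_zero (h₁ : lam₁ ∈ Mult I q x xs) (h₂ : lam₂ ∈ Mult I q x xs) :
    ∑ i, (lam₁ i - lam₂ i) • gradient (q i) x = 0 := by
  simp only [sub_smul, Finset.sum_sub_distrib, h₁.1, h₂.1, sub_self]

theorem quadComb_sub_quadComb (v : EuclideanSpace ℝ (Fin n)) :
    QuadComb q lam₁ x v - QuadComb q lam₂ x v =
      ⟪v, ∑ i, (lam₁ i - lam₂ i) • fderiv ℝ (gradient (q i)) x v⟫ := by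
  simp only [QuadComb, HessComb, HessApp, ← inner_sub_right, ← Finset.sum_sub_distrib, sub_smul]

theorem multArgmax_eq_mult_of_quadComb_eq {v : EuclideanSpace ℝ (Fin n)}
    (h : ∀ lam₁ ∈ Mult I q x xs, ∀ lam₂ ∈ Mult I q x xs,
      QuadComb q lam₁ x v = QuadComb q lam₂ x v) :
    MultArgmax I q x xs v = Mult I q x xs :=
  sep_eq_self_iff_mem_true.2 fun lam hlam mu hmu => (h mu hmu lam hlam).le

theorem quadComb_eq_of_mem_mult [DecidableEq ι] {E : Finset ι} (hunion : E ∪ I = Finset.univ)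
    (hq : ∀ i, ContDiff ℝ 2 (q i))
    (hrank : ∀ J ⊆ ActiveI I q x, ∀ᶠ y in 𝓝 x, RankAt q (E ∪ J) y ≤ RankAt q (E ∪ J) x)
    {v : EuclideanSpace ℝ (Fin n)}
    (hv : ∀ i, (i ∈ E ∨ i ∈ IplusSet I q x xs) → ⟪gradient (q i) x, v⟫ = 0)
    (h₁ : lam₁ ∈ Mult I q x xs) (h₂ : lam₂ ∈ Mult I q x xs) :
    QuadComb q lam₁ x v = QuadComb q lam₂ x v := by
  set J := I.filter fun i => lam₁ i ≠ lam₂ i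
  have hJ : J ⊆ ActiveI I q x := fun i hi =>
    have ⟨hiI, hne⟩ := Finset.mem_filter.1 hi
    Finset.mem_filter.2 ⟨hiI, eq_zero_of_mem_mult_of_ne h₁ h₂ hiI hne⟩
  have hsupp : ∀ {M : Type} [AddCommGroup M] [Module ℝ M] (w : ι → M),
      ∑ i, (lam₁ i - lam₂ i) • w i = ∑ i ∈ E ∪ J, (lam₁ i - lam₂ i) • w i := fun w => by
    refine (Finset.sum_subset (Finset.subset_univ _) fun i _ hi => ?_).symm
    have hiI : i ∈ I := by
      have := Finset.mem_univ i
      rw [← hunion, Finset.mem_union] at this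
      exact this.resolve_left fun hiE => hi (Finset.mem_union_left _ hiE)
    rw [sub_eq_zero.2 (not_not.1 fun hne => hi (Finset.mem_union_right _ (Finset.mem_filter.2
      ⟨hiI, hne⟩))), zero_smul]
  have hmem := sum_smul_fderiv_apply_mem_span_of_finrank_span_le
    (fun i _ => (hq i).differentiable_gradient x) (hrank J hJ)
    ((hsupp _).symm.trans (sum_sub_smul_gradient_eq_zero h₁ h₂)) v
  have hperp : span ℝ ((fun i => gradient (q i) x) '' ↑(E ∪ J)) ≤ (ℝ ∙ v)ᗮ := by
    refine span_le.2 ?_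
    rintro _ ⟨i, hi, rfl⟩
    refine mem_orthogonal_singleton_iff_inner_right.2 ?_
    rw [real_inner_comm]
    rcases Finset.mem_union.1 hi with hiE | hiJ
    · exact hv i (Or.inl hiE)
    · have ⟨hiI, hne⟩ := Finset.mem_filter.1 hiJ
      exact hv i (Or.inr (mem_iplusSet_of_mem_mult_of_ne h₁ h₂ hiI hne))
  rw [← sub_eq_zero, quadComb_sub_quadComb, hsupp]
  exact mem_orthogonal_singleton_iff_inner_right.1 (hperp hmem)

end Multipliers

theorem rcrcq_multArgmax_eq_mult_general
    {n : ℕ} {ι : Type*} [Fintype ι] [DecidableEq ι]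
    (E I : Finset ι) (hunion : E ∪ I = Finset.univ)
    (q : ι → EuclideanSpace ℝ (Fin n) → ℝ) (hq : ∀ i, ContDiff ℝ 2 (q i))
    (xbar : EuclideanSpace ℝ (Fin n))
    (hrcrcq : RCRCQat E I q xbar) :
    ∃ U : Set (EuclideanSpace ℝ (Fin n)), IsOpen U ∧ xbar ∈ U ∧
      ∀ x ∈ Feas E I q ∩ U, ∀ xs v : EuclideanSpace ℝ (Fin n),
        (∀ i, (i ∈ E ∨ i ∈ IplusSet I q x xs) → ⟪gradient (q i) x, v⟫ = 0) →
        (∀ lam₁ ∈ Mult I q x xs, ∀ lam₂ ∈ Mult I q x xs,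
            QuadComb q lam₁ x v = QuadComb q lam₂ x v) ∧
        MultArgmax I q x xs v = Mult I q x xs := by
  obtain ⟨U₀, hU₀, hrank⟩ := hrcrcq
  obtain ⟨U, hUsub, hUopen, hxbarU⟩ := _root_.mem_nhds_iff.1 <|
    inter_mem hU₀ (eventually_activeI_subset (I := I) fun i _ => (hq i).continuous.continuousAt)
  refine ⟨U, hUopen, hxbarU, fun x hx xs v hv => ?_⟩
  have hrank_x : ∀ J ⊆ ActiveI I q x, ∀ᶠ y in 𝓝 x, RankAt q (E ∪ J) y ≤ RankAt q (E ∪ J) x :=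
    fun J hJ => mem_of_superset (hUopen.mem_nhds hx.2) fun y hy =>
      (hrank J (hJ.trans (hUsub hx.2).2) y (hUsub hy).1 x (hUsub hx.2).1).le
  have hconst : ∀ lam₁ ∈ Mult I q x xs, ∀ lam₂ ∈ Mult I q x xs,
      QuadComb q lam₁ x v = QuadComb q lam₂ x v := fun _ h₁ _ h₂ =>
    quadComb_eq_of_mem_mult hunion hq hrank_x hv h₁ h₂
  exact ⟨hconst, multArgmax_eq_mult_of_quadComb_eq hconst⟩

/-- **Theorem 3.1(i).** Under RCRCQ at `x̄ ∈ Γ`, on a neighborhood of `x̄`, for every feasible `x`,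
every `x*` and every `v` orthogonal to `∇q_i(x)` for all `i ∈ E ∪ I⁺(x, x*)`, the quadratic form
`⟨v, ∇²⟨λ,q⟩(x)v⟩` is constant in `λ ∈ Λ(x, x*)`; consequently `Λ(x, x*; v) = Λ(x, x*)`. -/
theorem rcrcq_multArgmax_eq_mult
    {n : ℕ} {ι : Type*} [Fintype ι] [DecidableEq ι] [Nonempty ι]
    (E I : Finset ι) (hdisj : Disjoint E I) (hunion : E ∪ I = Finset.univ)
    (q : ι → EuclideanSpace ℝ (Fin n) → ℝ) (hq : ∀ i, ContDiff ℝ 2 (q i))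
    (xbar : EuclideanSpace ℝ (Fin n)) (hfeas : xbar ∈ Feas E I q)
    (hrcrcq : RCRCQat E I q xbar) :
    ∃ U : Set (EuclideanSpace ℝ (Fin n)), IsOpen U ∧ xbar ∈ U ∧
      ∀ x ∈ Feas E I q ∩ U, ∀ xs v : EuclideanSpace ℝ (Fin n),
        (∀ i, (i ∈ E ∨ i ∈ IplusSet I q x xs) → ⟪gradient (q i) x, v⟫ = 0) →
        (∀ lam₁ ∈ Mult I q x xs, ∀ lam₂ ∈ Mult I q x xs,
            QuadComb q lam₁ x v = QuadComb q lam₂ x v) ∧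
        MultArgmax I q x xs v = Mult I q x xs :=
  rcrcq_multArgmax_eq_mult_general E I hunion q hq xbar hrcrcq

end
end

section
/- (Lemma 3.1) Let MSCQ hold at x ∈ Γ and let x* ∈ ℝⁿ with Λ(x, x*) ≠ ∅. Assume that Λ(x, x*; v₁) = Λ(x, x*; v₂) whenever v₁, v₂ ∈ K(x, x*) ∖ {0}. Then for every v ∈ K(x, x*) and all λ¹, λ² ∈ Λ(x, x*; v): ∇²⟨λ¹ − λ², q⟩(x) v ∈ span{∇q_i(x) : i ∈ E ∪ I⁺(x, x*)}. -/
open Filter Topology Metric Set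
open scoped RealInnerProductSpace

noncomputable section

variable {n : ℕ} {ι : Type*} [Fintype ι] [DecidableEq ι]

/-! Under MSCQ the Bouligand tangent cone to `Γ` at `x` equals its linearization, so `K(x, x*)` is
the polyhedral cone cut out by the active gradients and `x*`; in particular it is closed under
addition. Both `λ¹` and `λ²` maximize `λ ↦ ⟨w, ∇²⟨λ, q⟩(x) w⟩` over `Λ(x, x*)` for every nonzero
`w ∈ K(x, x*)`, so the symmetric operator `H = ∇²⟨λ¹ - λ², q⟩(x)` satisfies `⟨w, H w⟩ = 0` on
`K(x, x*)`, and polarization gives `H v ⊥ K(x, x*)`.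

It remains to see that `K(x, x*)` spans the orthogonal complement of
`L = span {∇q_i(x) : i ∈ E ∪ I⁺(x, x*)}`. By a Gordan-type alternative there is `u₀ ∈ Lᗮ` with
`⟨∇q_i(x), u₀⟩ < 0` for all active `i ∉ I⁺(x, x*)`: otherwise a convex combination of the
projections of these gradients to `Lᗮ` vanishes, and perturbing a multiplier that is positive
on `I⁺(x, x*)` along it yields a multiplier that is positive outside `I⁺(x, x*)`.
Then `u₀ + s w ∈ K(x, x*)` for every `w ∈ Lᗮ` and small `s`. -/

theorem HasFDerivAt.tendsto_slope {V : Type*} [NormedAddCommGroup V] [NormedSpace ℝ V]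
    {f : V → ℝ} {f' : V →L[ℝ] ℝ} {x u : V} (hf : HasFDerivAt f f' x) {t : ℕ → ℝ} {c : ℕ → V}
    (ht : ∀ k, 0 < t k) (ht0 : Tendsto t atTop (𝓝 0)) (hc : Tendsto c atTop (𝓝 u)) :
    Tendsto (fun k => (f (x + t k • c k) - f x) / t k) atTop (𝓝 (f' u)) := by
  have hd : Tendsto (fun k => t k • c k) atTop (𝓝 0) := by simpa using ht0.smul hc
  have hcd : Tendsto (fun k => (t k)⁻¹ • t k • c k) atTop (𝓝 u) := by
    simpa [smul_smul, inv_mul_cancel₀ (ht _).ne'] using hc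
  simpa [div_eq_inv_mul] using
    hf.hasFDerivWithinAt.lim (s := univ) hd (.of_forall fun _ => mem_univ _) hcd

theorem mem_bcone_of_tendsto_infDist_div {V : Type*} [NormedAddCommGroup V] [NormedSpace ℝ V]
    {s : Set V} (hs : s.Nonempty) {x u : V} {t : ℕ → ℝ} (ht : ∀ k, 0 < t k)
    (ht0 : Tendsto t atTop (𝓝 0))
    (h : Tendsto (fun k => infDist (x + t k • u) s / t k) atTop (𝓝 0)) : u ∈ BCone s x := by
  have hy k : ∃ y ∈ s, dist (x + t k • u) y < infDist (x + t k • u) s + t k * t k :=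
    (infDist_lt_iff hs).1 (lt_add_of_pos_right _ (mul_pos (ht k) (ht k)))
  choose y hys hy using hy
  refine ⟨t, fun k => (t k)⁻¹ • (y k - x), ht, ht0, ?_, fun k => ?_⟩
  · rw [tendsto_iff_norm_sub_tendsto_zero]
    refine squeeze_zero (fun _ => norm_nonneg _) (fun k => ?_) (by simpa using h.add ht0)
    have htk := ht k
    have hyk : (t k)⁻¹ • (y k - x) - u = (t k)⁻¹ • (y k - (x + t k • u)) := by
      rw [smul_sub, smul_sub, smul_add, smul_smul, inv_mul_cancel₀ htk.ne', one_smul,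
        sub_add_eq_sub_sub]
    rw [hyk, norm_smul, norm_inv, Real.norm_of_nonneg htk.le, ← dist_eq_norm, dist_comm,
      inv_mul_le_iff₀ htk, mul_add, mul_div_cancel₀ _ htk.ne']
    exact (hy k).le
  · simpa [smul_smul, mul_inv_cancel₀ (ht k).ne'] using hys k

section Gradient

variable {V : Type*} [NormedAddCommGroup V] [InnerProductSpace ℝ V] [CompleteSpace V]
  {f : V → ℝ} {x u : V} {t : ℕ → ℝ}

theorem DifferentiableAt.tendsto_slope (hf : DifferentiableAt ℝ f x) {c : ℕ → V}
    (ht : ∀ k, 0 < t k) (ht0 : Tendsto t atTop (𝓝 0)) (hc : Tendsto c atTop (𝓝 u)) :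
    Tendsto (fun k => (f (x + t k • c k) - f x) / t k) atTop (𝓝 ⟪gradient f x, u⟫) := by
  simpa using hf.hasGradientAt.hasFDerivAt.tendsto_slope ht ht0 hc

theorem DifferentiableAt.tendsto_max_div (hf : DifferentiableAt ℝ f x) (hfx : f x ≤ 0)
    (hu : f x = 0 → ⟪gradient f x, u⟫ ≤ 0) (ht : ∀ k, 0 < t k) (ht0 : Tendsto t atTop (𝓝 0)) :
    Tendsto (fun k => max (f (x + t k • u)) 0 / t k) atTop (𝓝 0) := by
  rcases hfx.lt_or_eq with hneg | hzero
  · have hxk : Tendsto (fun k => x + t k • u) atTop (𝓝 x) := by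
      simpa using tendsto_const_nhds.add (ht0.smul_const u)
    refine tendsto_const_nhds.congr' ?_
    filter_upwards [hxk.eventually (hf.continuousAt.eventually_lt continuousAt_const hneg)]
      with k hk
    simp [max_eq_right hk.le]
  · have hslope := (hf.tendsto_slope ht ht0 (tendsto_const_nhds (x := u))).max
      (tendsto_const_nhds (x := (0 : ℝ)))
    rw [max_eq_right (hu hzero)] at hslope
    refine hslope.congr fun k => ?_
    rw [hzero, sub_zero, ← max_div_div_right (ht k).le, zero_div]

end Gradient

theorem exists_forall_inner_neg {V : Type*} [NormedAddCommGroup V] [InnerProductSpace ℝ V]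
    [CompleteSpace V] {κ : Type*} [Fintype κ] (p : κ → V) (A : Set κ)
    (h : ∀ μ ∈ stdSimplex ℝ κ, (∀ i ∉ A, μ i = 0) → ∑ i, μ i • p i ≠ 0) :
    ∃ z, ∀ i ∈ A, ⟪p i, z⟫ < 0 := by
  classical
  set S : Set (κ → ℝ) := stdSimplex ℝ κ ∩ {μ | ∀ i ∉ A, μ i = 0}
  have hSconv : Convex ℝ S := (convex_stdSimplex ℝ κ).inter fun a ha b hb s t _ _ _ i hi => by
    simp [ha i hi, hb i hi]
  have hSclosed : IsClosed {μ : κ → ℝ | ∀ i ∉ A, μ i = 0} := by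
    simp only [ofPred_forall]
    exact isClosed_iInter fun i => isClosed_iInter fun _ =>
      isClosed_eq (continuous_apply i) continuous_const
  set T := Fintype.linearCombination ℝ p
  have h0 : (0 : V) ∉ T '' S := by
    rintro ⟨μ, ⟨hμ, hμA⟩, hμ0⟩
    exact h μ hμ hμA hμ0
  obtain ⟨f, s, hfS, hs⟩ := geometric_hahn_banach_closed_point (hSconv.linear_image T)
    (((isCompact_stdSimplex ℝ κ).inter_right hSclosed).image
      T.continuous_of_finiteDimensional).isClosed h0
  refine ⟨(InnerProductSpace.toDual ℝ V).symm f, fun i hi => ?_⟩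
  rw [real_inner_comm, InnerProductSpace.toDual_symm_apply]
  have hsingle : Pi.single i 1 ∈ S := ⟨single_mem_stdSimplex ℝ i,
    fun j hj => Pi.single_eq_of_ne (ne_of_mem_of_not_mem hi hj).symm _⟩
  have hfi : f (p i) < s := hfS _ ⟨_, hsingle, by simp [T]⟩
  linarith [map_zero f ▸ hs]

theorem LinearMap.IsSymmetric.inner_map_eq_zero_of_isotropic {V : Type*}
    [NormedAddCommGroup V] [InnerProductSpace ℝ V] {A : V →ₗ[ℝ] V} (hA : A.IsSymmetric)
    {u v : V} (hu : ⟪u, A u⟫ = 0) (hv : ⟪v, A v⟫ = 0) (huv : ⟪u + v, A (u + v)⟫ = 0) :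
    ⟪A u, v⟫ = 0 := by
  rw [map_add, inner_add_left, inner_add_right, inner_add_right, hu, hv, ← hA u v,
    real_inner_comm (A u) v] at huv
  linarith

section Constraints

variable {ι : Type*} {E I : Finset ι} {q : ι → EuclideanSpace ℝ (Fin n) → ℝ}
  {x xs u : EuclideanSpace ℝ (Fin n)}

def linTangentCone (E I : Finset ι) (q : ι → EuclideanSpace ℝ (Fin n) → ℝ)
    (x : EuclideanSpace ℝ (Fin n)) : Set (EuclideanSpace ℝ (Fin n)) :=
  {u | (∀ i ∈ E, ⟪gradient (q i) x, u⟫ = 0) ∧ ∀ i ∈ ActiveI I q x, ⟪gradient (q i) x, u⟫ ≤ 0}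

theorem add_mem_linTangentCone {v : EuclideanSpace ℝ (Fin n)} (hu : u ∈ linTangentCone E I q x)
    (hv : v ∈ linTangentCone E I q x) : u + v ∈ linTangentCone E I q x :=
  ⟨fun i hi => by rw [inner_add_right, hu.1 i hi, hv.1 i hi, add_zero],
    fun i hi => by rw [inner_add_right]; linarith [hu.2 i hi, hv.2 i hi]⟩

theorem bcone_subset_linTangentCone (hq : ∀ i, DifferentiableAt ℝ (q i) x)
    (hx : x ∈ Feas E I q) : BCone (Feas E I q) x ⊆ linTangentCone E I q x := by
  rintro u ⟨t, c, ht, ht0, hc, hmem⟩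
  have hslope i := (hq i).tendsto_slope ht ht0 hc
  refine ⟨fun i hi => tendsto_nhds_unique (hslope i) ?_, fun i hi => ?_⟩
  · simp [(hmem _).1 i hi, hx.1 i hi]
  · rw [ActiveI, Finset.mem_filter] at hi
    refine le_of_tendsto (hslope i) (.of_forall fun k => ?_)
    refine div_nonpos_of_nonpos_of_nonneg ?_ (ht k).le
    simpa [hi.2] using (hmem k).2 i hi.1

theorem tendsto_infDist_theta_div [Fintype ι] [DecidableEq ι] (hunion : E ∪ I = Finset.univ)
    (hq : ∀ i, DifferentiableAt ℝ (q i) x) (hx : x ∈ Feas E I q)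
    (hu : u ∈ linTangentCone E I q x) {t : ℕ → ℝ} (ht : ∀ k, 0 < t k)
    (ht0 : Tendsto t atTop (𝓝 0)) :
    Tendsto (fun k => infDist (WithLp.toLp 2 fun i => q i (x + t k • u) : EuclideanSpace ℝ ι)
      (Theta E I) / t k) atTop (𝓝 0) := by
  -- `r k` is the scaled violation of the constraints at `x + t k • u`
  set r : ℕ → ι → ℝ := fun k i =>
    (if i ∈ E then q i (x + t k • u) else max (q i (x + t k • u)) 0) / t k
  have hr : Tendsto (fun k => (WithLp.toLp 2 (r k) : EuclideanSpace ℝ ι)) atTop (𝓝 0) := by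
    refine ((PiLp.continuous_toLp 2 _).tendsto 0).comp (tendsto_pi_nhds.2 fun i => ?_)
    by_cases hiE : i ∈ E
    · have hslope := (hq i).tendsto_slope ht ht0 (tendsto_const_nhds (x := u))
      rw [hx.1 i hiE, hu.1 i hiE] at hslope
      simpa [r, hiE] using hslope
    · have hiI : i ∈ I := (Finset.mem_union.1 (hunion ▸ Finset.mem_univ i)).resolve_left hiE
      simpa [r, hiE] using (hq i).tendsto_max_div (hx.2 i hiI)
        (fun h => hu.2 i (Finset.mem_filter.2 ⟨hiI, h⟩)) ht ht0
  refine squeeze_zero (fun k => div_nonneg infDist_nonneg (ht k).le) (fun k => ?_)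
    (by simpa using hr.norm)
  set y : EuclideanSpace ℝ ι := WithLp.toLp 2 fun i => q i (x + t k • u)
  have hmem : y - t k • WithLp.toLp 2 (r k) ∈ Theta E I := by
    refine ⟨fun i hi => ?_, fun i hi => ?_⟩
    · simp [y, r, hi, mul_div_cancel₀ _ (ht k).ne']
    · by_cases hiE : i ∈ E <;> simp [y, r, hiE, mul_div_cancel₀ _ (ht k).ne']
  rw [div_le_iff₀ (ht k)]
  refine (infDist_le_dist_of_mem hmem).trans_eq ?_
  rw [dist_eq_norm, sub_sub_cancel, norm_smul, Real.norm_of_nonneg (ht k).le, mul_comm]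

theorem linTangentCone_subset_bcone [Fintype ι] [DecidableEq ι] (hunion : E ∪ I = Finset.univ)
    (hq : ∀ i, DifferentiableAt ℝ (q i) x) (hx : x ∈ Feas E I q) {κ : ℝ}
    (hmscq : MSCQat E I q x κ) : linTangentCone E I q x ⊆ BCone (Feas E I q) x := by
  obtain ⟨U, hU, hdist⟩ := hmscq
  intro u hu
  have ht (k : ℕ) : (0 : ℝ) < 1 / (k + 1) := by positivity
  have ht0 : Tendsto (fun k : ℕ => (1 : ℝ) / (k + 1)) atTop (𝓝 0) :=
    tendsto_one_div_add_atTop_nhds_zero_nat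
  have hxk : Tendsto (fun k : ℕ => x + (1 / (k + 1 : ℝ)) • u) atTop (𝓝 x) := by
    simpa using tendsto_const_nhds.add (ht0.smul_const u)
  refine mem_bcone_of_tendsto_infDist_div ⟨x, hx⟩ ht ht0 (squeeze_zero'
    (.of_forall fun k => div_nonneg infDist_nonneg (ht k).le) ?_
    (by simpa only [mul_zero] using (tendsto_infDist_theta_div hunion hq hx hu ht ht0).const_mul κ))
  filter_upwards [hxk.eventually_mem hU] with k hk
  rw [← mul_div_assoc]
  exact div_le_div_of_nonneg_right (hdist _ hk) (ht k).le

theorem bcone_feas_eq_linTangentCone [Fintype ι] [DecidableEq ι] (hunion : E ∪ I = Finset.univ)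
    (hq : ∀ i, DifferentiableAt ℝ (q i) x) (hx : x ∈ Feas E I q) {κ : ℝ}
    (hmscq : MSCQat E I q x κ) : BCone (Feas E I q) x = linTangentCone E I q x :=
  (bcone_subset_linTangentCone hq hx).antisymm (linTangentCone_subset_bcone hunion hq hx hmscq)

end Constraints

section Multipliers

variable {ι : Type*} [Fintype ι] {E I : Finset ι} {q : ι → EuclideanSpace ℝ (Fin n) → ℝ}
  {x xs : EuclideanSpace ℝ (Fin n)}

def gradSpan (E I : Finset ι) (q : ι → EuclideanSpace ℝ (Fin n) → ℝ)
    (x xs : EuclideanSpace ℝ (Fin n)) : Submodule ℝ (EuclideanSpace ℝ (Fin n)) :=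
  Submodule.span ℝ ((fun i => gradient (q i) x) '' {i | i ∈ E ∨ i ∈ IplusSet I q x xs})

theorem gradient_mem_gradSpan {i : ι} (hi : i ∈ E ∨ i ∈ IplusSet I q x xs) :
    gradient (q i) x ∈ gradSpan E I q x xs :=
  Submodule.subset_span ⟨i, hi, rfl⟩

theorem mem_activeI_of_mem_iplusSet {i : ι} (hi : i ∈ IplusSet I q x xs) : i ∈ ActiveI I q x := by
  obtain ⟨lam, hlam, hi⟩ := hi
  rw [IplusF, Finset.mem_filter] at hi
  exact Finset.mem_filter.2
    ⟨hi.1, (mul_eq_zero.1 (hlam.2 i hi.1).2).resolve_left hi.2.ne'⟩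

theorem convex_mult : Convex ℝ (Mult I q x xs) := by
  intro a ha b hb s t hs ht hst
  refine ⟨?_, fun i hi => ⟨?_, ?_⟩⟩
  · calc ∑ i, (s • a + t • b) i • gradient (q i) x
        = s • ∑ i, a i • gradient (q i) x + t • ∑ i, b i • gradient (q i) x := by
          simp [add_smul, mul_smul, Finset.sum_add_distrib, Finset.smul_sum]
      _ = xs := by rw [ha.1, hb.1, ← add_smul, hst, one_smul]
  · simpa using add_nonneg (mul_nonneg hs (ha.2 i hi).1) (mul_nonneg ht (hb.2 i hi).1)
  · simp [add_mul, mul_assoc, (ha.2 i hi).2, (hb.2 i hi).2]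

theorem add_mem_mult {lam d : EuclideanSpace ℝ ι} (hlam : lam ∈ Mult I q x xs)
    (hd : ∑ i, d i • gradient (q i) x = 0) (hnonneg : ∀ i ∈ I, 0 ≤ lam i + d i)
    (hcompl : ∀ i ∈ I, d i * q i x = 0) : lam + d ∈ Mult I q x xs :=
  ⟨by simp [add_smul, Finset.sum_add_distrib, hlam.1, hd],
    fun i hi => ⟨by simpa using hnonneg i hi, by simp [add_mul, (hlam.2 i hi).2, hcompl i hi]⟩⟩

theorem exists_mem_mult_forall_iplusSet_pos (hne : (Mult I q x xs).Nonempty) :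
    ∃ lam ∈ Mult I q x xs, ∀ i ∈ IplusSet I q x xs, 0 < lam i := by
  classical
  suffices ∀ s : Finset ι, ∃ lam ∈ Mult I q x xs, ∀ i ∈ s, i ∈ IplusSet I q x xs → 0 < lam i by
    simpa using this Finset.univ
  intro s
  induction s using Finset.induction_on with
  | empty => exact hne.imp fun lam hlam => ⟨hlam, by simp⟩
  | insert a s _ ih =>
    obtain ⟨lam, hlam, hpos⟩ := ih
    by_cases ha : a ∈ IplusSet I q x xs
    · obtain ⟨mu, hmu, hmua⟩ := ha
      refine ⟨(1 / 2 : ℝ) • lam + (1 / 2 : ℝ) • mu,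
        convex_mult hlam hmu (by norm_num) (by norm_num) (by norm_num), fun i hi hiP => ?_⟩
      have hiI := (Finset.mem_filter.1 (mem_activeI_of_mem_iplusSet hiP)).1
      have hsum : 0 < lam i + mu i := by
        rcases Finset.mem_insert.1 hi with rfl | hi
        · linarith [(hlam.2 i hiI).1, (Finset.mem_filter.1 hmua).2]
        · linarith [hpos i hi hiP, (hmu.2 i hiI).1]
      simp only [PiLp.add_apply, PiLp.smul_apply, smul_eq_mul]
      linarith
    · exact ⟨lam, hlam, fun i hi hiP => (Finset.mem_insert.1 hi).elim
        (fun h => absurd (h ▸ hiP) ha) (fun h => hpos i h hiP)⟩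

theorem xs_mem_gradSpan [DecidableEq ι] (hunion : E ∪ I = Finset.univ)
    (hne : (Mult I q x xs).Nonempty) : xs ∈ gradSpan E I q x xs := by
  obtain ⟨lam, hlam⟩ := hne
  suffices ∑ i, lam i • gradient (q i) x ∈ gradSpan E I q x xs by rwa [hlam.1] at this
  refine Submodule.sum_mem _ fun i _ => ?_
  by_cases hi : i ∈ E ∨ i ∈ IplusSet I q x xs
  · exact Submodule.smul_mem _ _ (gradient_mem_gradSpan hi)
  · have hiI : i ∈ I := (Finset.mem_union.1 (hunion ▸ Finset.mem_univ i)).resolve_left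
      (fun h => hi (.inl h))
    have hlam0 : lam i = 0 := ((hlam.2 i hiI).1.eq_of_not_lt fun h =>
      hi (.inr ⟨lam, hlam, Finset.mem_filter.2 ⟨hiI, h⟩⟩)).symm
    simp [hlam0]

theorem mem_iplusSet_of_pos (hdisj : Disjoint E I) (hne : (Mult I q x xs).Nonempty)
    {μ : ι → ℝ} (hμ : ∀ i, 0 ≤ μ i) (hμA : ∀ i ∉ ActiveI I q x, μ i = 0)
    (hμL : ∑ i, μ i • gradient (q i) x ∈ gradSpan E I q x xs) {i : ι} (hi : 0 < μ i) :
    i ∈ IplusSet I q x xs := by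
  obtain ⟨lam, hlam, hlampos⟩ := exists_mem_mult_forall_iplusSet_pos hne
  obtain ⟨l, hlS, hl⟩ := (Finsupp.mem_span_image_iff_linearCombination ℝ).1 hμL
  rw [Finsupp.linearCombination_apply, Finsupp.sum_fintype _ _ (by simp)] at hl
  have hl0 j (hjI : j ∈ I) (hj : j ∉ IplusSet I q x xs) : l j = 0 :=
    Finsupp.notMem_support_iff.1 fun h =>
      (hlS h).elim (Finset.disjoint_right.1 hdisj hjI) hj
  -- moving `lam` along `d` keeps it a multiplier for small steps and makes `μ`'s support positive
  set d : EuclideanSpace ℝ ι := WithLp.toLp 2 fun j => μ j - l j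
  have hd : ∑ j, d j • gradient (q j) x = 0 := by
    simp [d, sub_smul, Finset.sum_sub_distrib, hl]
  have hev : ∀ᶠ ε in 𝓝 (0 : ℝ), ∀ j ∈ IplusSet I q x xs, 0 < lam j + ε * d j := by
    refine (eventually_all_finite (toFinite _)).2 fun j hj => ?_
    have hcont : Tendsto (fun ε : ℝ => lam j + ε * d j) (𝓝 0) (𝓝 (lam j)) := by
      simpa using (tendsto_id (x := 𝓝 (0 : ℝ))).mul_const (d j) |>.const_add (lam j)
    exact hcont.eventually_const_lt (hlampos j hj)
  obtain ⟨ε, hε, hεpos⟩ :=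
    ((hev.filter_mono nhdsWithin_le_nhds).and (self_mem_nhdsWithin (s := Ioi 0))).exists
  have hmem : lam + ε • d ∈ Mult I q x xs := by
    refine add_mem_mult hlam (by simp [Finset.smul_sum.symm, mul_smul, hd]) (fun j hj => ?_)
      (fun j hj => ?_)
    · by_cases hjP : j ∈ IplusSet I q x xs
      · simpa using (hε j hjP).le
      · have := (hlam.2 j hj).1
        have := hμ j
        simp only [PiLp.smul_apply, smul_eq_mul, d, hl0 j hj hjP, sub_zero]
        positivity
    · by_cases hq0 : q j x = 0
      · simp [hq0]
      · have hjA : j ∉ ActiveI I q x := fun h => hq0 (Finset.mem_filter.1 h).2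
        have hjP : j ∉ IplusSet I q x xs := fun h => hjA (mem_activeI_of_mem_iplusSet h)
        simp [d, hμA j hjA, hl0 j hj hjP]
  by_contra hiP
  have hiI : i ∈ I := (Finset.mem_filter.1 (not_imp_comm.1 (hμA i) hi.ne')).1
  refine hiP ⟨lam + ε • d, hmem, Finset.mem_filter.2 ⟨hiI, ?_⟩⟩
  have := (hlam.2 i hiI).1
  simp only [PiLp.add_apply, PiLp.smul_apply, smul_eq_mul, d, hl0 i hiI hiP, sub_zero]
  positivity

theorem exists_mem_orthogonal_forall_inner_neg (hdisj : Disjoint E I)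
    (hne : (Mult I q x xs).Nonempty) :
    ∃ u ∈ (gradSpan E I q x xs)ᗮ, ∀ i ∈ ActiveI I q x, i ∉ IplusSet I q x xs →
      ⟪gradient (q i) x, u⟫ < 0 := by
  set L := gradSpan E I q x xs
  set P := Lᗮ.starProjection
  obtain ⟨z, hz⟩ := exists_forall_inner_neg (fun i => P (gradient (q i) x))
    {i | i ∈ ActiveI I q x ∧ i ∉ IplusSet I q x xs} fun μ hμ hμA hsum => by
      have hμL : ∑ i, μ i • gradient (q i) x ∈ L := by
        have hdiff : ∑ i, μ i • (gradient (q i) x - P (gradient (q i) x)) ∈ L :=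
          Submodule.sum_mem _ fun i _ => Submodule.smul_mem _ _ (by
            have h := Lᗮ.sub_starProjection_mem_orthogonal (gradient (q i) x)
            rwa [Submodule.orthogonal_orthogonal] at h)
        simpa [smul_sub, Finset.sum_sub_distrib, hsum] using hdiff
      obtain ⟨i, -, hi⟩ := Finset.exists_lt_of_sum_lt (s := Finset.univ) (f := 0) (g := μ)
        (by simp [hμ.2])
      have hiA : i ∈ ActiveI I q x ∧ i ∉ IplusSet I q x xs := by_contra fun h => hi.ne' (hμA i h)
      exact hiA.2 (mem_iplusSet_of_pos hdisj ⟨_, hne.some_mem⟩ hμ.1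
        (fun j hj => hμA j fun h => hj h.1) hμL hi)
  refine ⟨P z, Submodule.coe_mem _, fun i hA hP => ?_⟩
  rw [← Submodule.inner_starProjection_left_eq_right]
  exact hz i ⟨hA, hP⟩

theorem mem_gradSpan_of_forall_inner_eq_zero [DecidableEq ι] (hdisj : Disjoint E I)
    (hunion : E ∪ I = Finset.univ) (hne : (Mult I q x xs).Nonempty)
    {y : EuclideanSpace ℝ (Fin n)}
    (hy : ∀ u ∈ linTangentCone E I q x, ⟪xs, u⟫ = 0 → ⟪y, u⟫ = 0) :
    y ∈ gradSpan E I q x xs := by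
  set L := gradSpan E I q x xs
  obtain ⟨u₀, hu₀, hneg⟩ := exists_mem_orthogonal_forall_inner_neg hdisj hne
  have hcone : ∀ u ∈ Lᗮ, (∀ i ∈ ActiveI I q x, i ∉ IplusSet I q x xs →
      ⟪gradient (q i) x, u⟫ ≤ 0) → ⟪y, u⟫ = 0 := by
    intro u hu hA
    refine hy u ⟨fun i hi => L.inner_right_of_mem_orthogonal (gradient_mem_gradSpan (.inl hi)) hu,
      fun i hi => ?_⟩ (L.inner_right_of_mem_orthogonal (xs_mem_gradSpan hunion hne) hu)
    by_cases hiP : i ∈ IplusSet I q x xs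
    · exact (L.inner_right_of_mem_orthogonal (gradient_mem_gradSpan (.inr hiP)) hu).le
    · exact hA i hi hiP
  rw [← L.orthogonal_orthogonal, Submodule.mem_orthogonal]
  intro w hw
  have hev : ∀ᶠ s in 𝓝 (0 : ℝ), ∀ i ∈ ActiveI I q x, i ∉ IplusSet I q x xs →
      ⟪gradient (q i) x, u₀ + s • w⟫ ≤ 0 := by
    refine (eventually_all_finset _).2 fun i hi => ?_
    by_cases hiP : i ∈ IplusSet I q x xs
    · exact .of_forall fun _ h => absurd hiP h
    have hc : Continuous fun s : ℝ => ⟪gradient (q i) x, u₀ + s • w⟫ := by fun_prop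
    exact ((hc.tendsto 0).eventually_lt_const (by simpa using hneg i hi hiP)).mono
      fun _ hs _ => hs.le
  obtain ⟨s, hs, hs0⟩ :=
    ((hev.filter_mono nhdsWithin_le_nhds).and (self_mem_nhdsWithin (s := Ioi 0))).exists
  have h₀ := hcone u₀ hu₀ fun i hA hP => (hneg i hA hP).le
  have hs := hcone (u₀ + s • w) (add_mem hu₀ (Submodule.smul_mem _ _ hw)) hs
  rw [inner_add_right, real_inner_smul_right, h₀, zero_add] at hs
  rw [real_inner_comm]
  exact (mul_eq_zero.1 hs).resolve_left (ne_of_gt hs0)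

end Multipliers

section Hessian

variable {ι : Type*} [Fintype ι] {I : Finset ι} {q : ι → EuclideanSpace ℝ (Fin n) → ℝ}
  {x xs : EuclideanSpace ℝ (Fin n)}

theorem inner_hessApp_left (f : EuclideanSpace ℝ (Fin n) → ℝ) (x a b : EuclideanSpace ℝ (Fin n)) :
    ⟪HessApp f x a, b⟫ = fderiv ℝ (fderiv ℝ f) x a b := by
  have h : (fun y => gradient f y) =
      (InnerProductSpace.toDual ℝ (EuclideanSpace ℝ (Fin n))).symm ∘ fderiv ℝ f := rfl
  rw [HessApp, h, LinearIsometryEquiv.comp_fderiv]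
  exact InnerProductSpace.toDual_symm_apply

theorem inner_hessApp_comm {f : EuclideanSpace ℝ (Fin n) → ℝ} (hf : ContDiff ℝ 2 f)
    (x a b : EuclideanSpace ℝ (Fin n)) : ⟪HessApp f x a, b⟫ = ⟪a, HessApp f x b⟫ := by
  rw [real_inner_comm (HessApp f x b) a, inner_hessApp_left, inner_hessApp_left]
  exact hf.contDiffAt.isSymmSndFDerivAt (by simp) a b

def hessCombₗ (q : ι → EuclideanSpace ℝ (Fin n) → ℝ) (lam : EuclideanSpace ℝ ι)
    (x : EuclideanSpace ℝ (Fin n)) : EuclideanSpace ℝ (Fin n) →ₗ[ℝ] EuclideanSpace ℝ (Fin n) where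
  toFun := HessComb q lam x
  map_add' a b := by simp [HessComb, HessApp, smul_add, Finset.sum_add_distrib]
  map_smul' c a := by simp [HessComb, HessApp, Finset.smul_sum, smul_comm c]

theorem isSymmetric_hessCombₗ (hq : ∀ i, ContDiff ℝ 2 (q i)) (lam : EuclideanSpace ℝ ι)
    (x : EuclideanSpace ℝ (Fin n)) : (hessCombₗ q lam x).IsSymmetric := fun a b => by
  change ⟪HessComb q lam x a, b⟫ = ⟪a, HessComb q lam x b⟫
  simp only [HessComb, sum_inner, inner_sum, real_inner_smul_left, real_inner_smul_right,
    inner_hessApp_comm (hq _)]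

theorem quadComb_sub (lam mu : EuclideanSpace ℝ ι) (w : EuclideanSpace ℝ (Fin n)) :
    QuadComb q (lam - mu) x w = QuadComb q lam x w - QuadComb q mu x w := by
  simp [QuadComb, HessComb, sub_smul, Finset.sum_sub_distrib, inner_sub_right]

theorem quadComb_sub_eq_zero_of_mem_multArgmax {lam mu : EuclideanSpace ℝ ι}
    {w : EuclideanSpace ℝ (Fin n)} (hlam : lam ∈ MultArgmax I q x xs w)
    (hmu : mu ∈ MultArgmax I q x xs w) : QuadComb q (lam - mu) x w = 0 := by
  rw [quadComb_sub]
  linarith [hlam.2 _ hmu.1, hmu.2 _ hlam.1]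

end Hessian

theorem lemma31_general
    {n : ℕ} {ι : Type*} [Fintype ι] [DecidableEq ι]
    (E I : Finset ι) (hdisj : Disjoint E I) (hunion : E ∪ I = Finset.univ)
    (q : ι → EuclideanSpace ℝ (Fin n) → ℝ) (hq : ∀ i, ContDiff ℝ 2 (q i))
    (x xs : EuclideanSpace ℝ (Fin n)) (hfeas : x ∈ Feas E I q)
    (hmscq : ∃ κ > (0:ℝ), MSCQat E I q x κ)
    (hne : (Mult I q x xs).Nonempty)
    (hconst : ∀ v₁ ∈ Crit E I q x xs \ {0}, ∀ v₂ ∈ Crit E I q x xs \ {0},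
      MultArgmax I q x xs v₁ = MultArgmax I q x xs v₂) :
    ∀ v ∈ Crit E I q x xs, ∀ lam₁ ∈ MultArgmax I q x xs v, ∀ lam₂ ∈ MultArgmax I q x xs v,
      HessComb q (lam₁ - lam₂) x v ∈
        Submodule.span ℝ
          ((fun i => gradient (q i) x) '' {i | i ∈ E ∨ i ∈ IplusSet I q x xs}) := by
  intro v hv lam₁ hlam₁ lam₂ hlam₂
  obtain ⟨κ, -, hκ⟩ := hmscq
  have hcrit : Crit E I q x xs = linTangentCone E I q x ∩ {u | ⟪xs, u⟫ = 0} := by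
    rw [Crit, bcone_feas_eq_linTangentCone hunion
      (fun i => (hq i).differentiable two_ne_zero x) hfeas hκ]
  rcases eq_or_ne v 0 with rfl | hv0
  · have h0 : HessComb q (lam₁ - lam₂) x 0 = 0 := (hessCombₗ q (lam₁ - lam₂) x).map_zero
    rw [h0]
    exact Submodule.zero_mem _
  have hiso : ∀ w ∈ Crit E I q x xs, QuadComb q (lam₁ - lam₂) x w = 0 := by
    intro w hw
    rcases eq_or_ne w 0 with rfl | hw0
    · exact inner_zero_left _
    have h := hconst v ⟨hv, hv0⟩ w ⟨hw, hw0⟩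
    exact quadComb_sub_eq_zero_of_mem_multArgmax (h ▸ hlam₁) (h ▸ hlam₂)
  rw [hcrit] at hv hiso
  refine mem_gradSpan_of_forall_inner_eq_zero hdisj hunion hne fun u hu hxu => ?_
  refine (isSymmetric_hessCombₗ hq _ x).inner_map_eq_zero_of_isotropic (hiso v hv)
    (hiso u ⟨hu, hxu⟩) (hiso (v + u) ⟨add_mem_linTangentCone hv.1 hu, ?_⟩)
  change ⟪xs, v + u⟫ = 0
  rw [inner_add_right, hxu, add_zero]
  exact hv.2

/-- **Lemma 3.1.** Let MSCQ hold at `x ∈ Γ` and `Λ(x, x*) ≠ ∅`, and suppose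
`Λ(x, x*; v₁) = Λ(x, x*; v₂)` for all nonzero `v₁, v₂ ∈ K(x, x*)`. Then for every
`v ∈ K(x, x*)` and all `λ¹, λ² ∈ Λ(x, x*; v)`,
`∇²⟨λ¹ − λ², q⟩(x)v ∈ span{∇q_i(x) : i ∈ E ∪ I⁺(x, x*)}`. -/
theorem lemma31
    {n : ℕ} {ι : Type*} [Fintype ι] [DecidableEq ι] [Nonempty ι]
    (E I : Finset ι) (hdisj : Disjoint E I) (hunion : E ∪ I = Finset.univ)
    (q : ι → EuclideanSpace ℝ (Fin n) → ℝ) (hq : ∀ i, ContDiff ℝ 2 (q i))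
    (x xs : EuclideanSpace ℝ (Fin n)) (hfeas : x ∈ Feas E I q)
    (hmscq : ∃ κ > (0:ℝ), MSCQat E I q x κ)
    (hne : (Mult I q x xs).Nonempty)
    (hconst : ∀ v₁ ∈ Crit E I q x xs \ {0}, ∀ v₂ ∈ Crit E I q x xs \ {0},
      MultArgmax I q x xs v₁ = MultArgmax I q x xs v₂) :
    ∀ v ∈ Crit E I q x xs, ∀ lam₁ ∈ MultArgmax I q x xs v, ∀ lam₂ ∈ MultArgmax I q x xs v,
      HessComb q (lam₁ - lam₂) x v ∈
        Submodule.span ℝ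
          ((fun i => gradient (q i) x) '' {i | i ∈ E ∨ i ∈ IplusSet I q x xs}) :=
  lemma31_general E I hdisj hunion q hq x xs hfeas hmscq hne hconst

end
end

section
/- (Example 4.1, constraint-qualification claims) In ℝ⁴ with x = (x₁, x₂, x₃, x₄), let q₁(x) = x₁ − x₃, q₂(x) = −x₁ − x₃, q₃(x) = x₂ − 2x₃, q₄(x) = −x₂ − 2x₃, q₅(x) = −x₁ + x₂², q₆(x) = −x₁ (inequality constraints, I = {1, …, 6}) and q₇(x) = −x₁ + x₂² + x₂ (equality constraint, E = {7}), and let Γ := {x ∈ ℝ⁴ : q_i(x) ≤ 0 for i = 1, …, 6, q₇(x) = 0} and x̄ := (0,0,0,0) ∈ Γ. Then: (a) CRCQ fails at x̄; (b) RCRCQ holds at x̄. -/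
open Filter Topology Metric Set
open scoped RealInnerProductSpace

noncomputable section

variable {n : ℕ} {ι : Type*} [Fintype ι] [DecidableEq ι]

/-- The constant rank constraint qualification at `xbar`. -/
def CRCQat {n : ℕ} {ι : Type*} [Fintype ι] [DecidableEq ι]
    (E I : Finset ι) (q : ι → EuclideanSpace ℝ (Fin n) → ℝ)
    (xbar : EuclideanSpace ℝ (Fin n)) : Prop :=
  ∃ U ∈ 𝓝 xbar, ∀ K ⊆ E, ∀ J ⊆ ActiveI I q xbar, ∀ x ∈ U, ∀ y ∈ U,
    RankAt q (K ∪ J) x = RankAt q (K ∪ J) y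

/-- The constraint functions of Example 4.1: `q₁,…,q₆` are inequality constraints (indices
`0,…,5`) and `q₇` (index `6`) is the equality constraint. -/
def qEx : Fin 7 → EuclideanSpace ℝ (Fin 4) → ℝ :=
  ![fun x => x 0 - x 2,
    fun x => -x 0 - x 2,
    fun x => x 1 - 2 * x 2,
    fun x => -x 1 - 2 * x 2,
    fun x => -x 0 + x 1 ^ 2,
    fun x => -x 0,
    fun x => -x 0 + x 1 ^ 2 + x 1]

/-!
Each gradient `∇qᵢ(x)` differs from `∇qᵢ(0)` by a multiple of `e₂`, so the subspace
`span {∇qᵢ(x) : i ∈ s} + ℝ e₂` does not depend on `x`, and the rank of the family at `x` is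
determined by whether `e₂` lies in its span. For `s = {5, 6}` it does exactly when `x₂ ≠ 0`,
so CRCQ fails. For `s = E ∪ J` and `|x₂| < 1/4`, whether `e₂` lies in the span depends only on `J`:
when `J` contains `5` or `6`, or two of `1, 2, 3, 4`, an explicit combination produces `e₂`;
otherwise `s ⊆ {7, i}` with `i ≤ 4`, and `∇qᵢ` has a nonzero third coordinate while `∇q₇(x)` does
not. Hence RCRCQ holds.

Indices here follow the paper; in the code, constraint `qᵢ` is `qEx (i - 1)` and `xⱼ` is `x (j - 1)`.
-/

namespace Submodule

variable {K V α : Type*} [DivisionRing K] [AddCommGroup V] [Module K V]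

theorem span_image_sup_span_singleton_eq {u v : α → V} {s : Set α} {w : V}
    (h : ∀ i ∈ s, u i - v i ∈ K ∙ w) :
    span K (u '' s) ⊔ K ∙ w = span K (v '' s) ⊔ K ∙ w := by
  have key : ∀ u v : α → V, (∀ i ∈ s, u i - v i ∈ K ∙ w) →
      span K (u '' s) ⊔ K ∙ w ≤ span K (v '' s) ⊔ K ∙ w := by
    intro u v h
    refine sup_le (span_le.2 ?_) le_sup_right
    rintro _ ⟨i, hi, rfl⟩
    rw [← add_sub_cancel (v i) (u i)]
    exact add_mem (mem_sup_left (subset_span ⟨i, hi, rfl⟩)) (mem_sup_right (h i hi))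
  exact (key u v h).antisymm (key v u fun i hi => by simpa using neg_mem (h i hi))

variable [FiniteDimensional K V] {W W' : Submodule K V} {w : V}

theorem finrank_eq_of_sup_span_singleton_eq (h : W ⊔ K ∙ w = W' ⊔ K ∙ w)
    (hw : w ∈ W ↔ w ∈ W') : Module.finrank K W = Module.finrank K W' := by
  by_cases hW : w ∈ W
  · rw [sup_eq_left.2 ((span_singleton_le_iff_mem _ _).2 hW),
      sup_eq_left.2 ((span_singleton_le_iff_mem _ _).2 (hw.1 hW))] at h
    rw [h]
  · have := finrank_sup_span_singleton hW
    rw [h, finrank_sup_span_singleton (hw.not.1 hW)] at this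
    omega

theorem finrank_eq_add_one_of_sup_span_singleton_eq (h : W ⊔ K ∙ w = W' ⊔ K ∙ w)
    (hW : w ∉ W) (hW' : w ∈ W') : Module.finrank K W' = Module.finrank K W + 1 := by
  rw [← finrank_sup_span_singleton hW, h, sup_eq_left.2 ((span_singleton_le_iff_mem _ _).2 hW')]

end Submodule

theorem hasGradientAt_inner_add_mul_inner_sq {F : Type*} [NormedAddCommGroup F]
    [InnerProductSpace ℝ F] [CompleteSpace F] (a e x : F) (β : ℝ) :
    HasGradientAt (fun y => ⟪a, y⟫ + β * ⟪e, y⟫ ^ 2) (a + (2 * β * ⟪e, x⟫) • e) x := by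
  have ha : HasFDerivAt (fun y => ⟪a, y⟫) (innerSL ℝ a) x := (innerSL ℝ a).hasFDerivAt
  have he : HasFDerivAt (fun y => ⟪e, y⟫) (innerSL ℝ e) x := (innerSL ℝ e).hasFDerivAt
  rw [hasGradientAt_iff_hasFDerivAt]
  refine (ha.add ((he.pow 2).const_mul β)).congr_fderiv ?_
  ext v
  simp only [Nat.add_one_sub_one, pow_one, nsmul_eq_mul, Nat.cast_ofNat, add_apply,
    coe_innerSL_apply, smul_apply, smul_eq_mul, map_add, map_smul,
    InnerProductSpace.toDual_apply_apply, add_right_inj]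
  ring

theorem EuclideanSpace.frequently_apply_ne_zero {α : Type*} [Fintype α] [DecidableEq α] (i : α) :
    ∃ᶠ x in 𝓝 (0 : EuclideanSpace ℝ α), x i ≠ 0 := by
  have h : Tendsto (fun t : ℝ => t • EuclideanSpace.single i (1 : ℝ)) (𝓝[≠] 0) (𝓝 0) :=
    ((continuous_id.smul continuous_const).tendsto' 0 0 (zero_smul _ _)).mono_left
      nhdsWithin_le_nhds
  exact h.frequently (eventually_nhdsWithin_of_forall fun t ht => by simpa using ht).frequently

theorem not_crcqAt_of_frequently_rankAt_ne {m : ℕ} {α : Type*} [Fintype α] [DecidableEq α]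
    {E I K J : Finset α} {q : α → EuclideanSpace ℝ (Fin m) → ℝ} {x₀ : EuclideanSpace ℝ (Fin m)}
    (hK : K ⊆ E) (hJ : J ⊆ ActiveI I q x₀)
    (h : ∃ᶠ x in 𝓝 x₀, RankAt q (K ∪ J) x ≠ RankAt q (K ∪ J) x₀) : ¬CRCQat E I q x₀ := by
  rintro ⟨U, hU, hconst⟩
  obtain ⟨x, hx, hxU⟩ := (h.and_eventually hU).exists
  exact hx (hconst K hK J hJ x hxU x₀ (mem_of_mem_nhds hU))

namespace Example41

local notation "e₂" => EuclideanSpace.single (1 : Fin 4) (1 : ℝ)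

def qLin : Fin 7 → EuclideanSpace ℝ (Fin 4) :=
  ![!₂[1, 0, -1, 0], !₂[-1, 0, -1, 0], !₂[0, 1, -2, 0], !₂[0, -1, -2, 0],
    !₂[-1, 0, 0, 0], !₂[-1, 0, 0, 0], !₂[-1, 1, 0, 0]]

def qQuad : Fin 7 → ℝ := ![0, 0, 0, 0, 1, 0, 1]

theorem qEx_eq (i : Fin 7) : qEx i = fun y => ⟪qLin i, y⟫ + qQuad i * ⟪e₂, y⟫ ^ 2 := by
  funext y
  fin_cases i <;> simp [qEx, qLin, qQuad, PiLp.inner_apply, Fin.sum_univ_four] <;> ring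

theorem gradient_qEx (i : Fin 7) (x : EuclideanSpace ℝ (Fin 4)) :
    gradient (qEx i) x = qLin i + (2 * qQuad i * x 1) • e₂ := by
  rw [qEx_eq, (hasGradientAt_inner_add_mul_inner_sq _ _ x _).gradient,
    EuclideanSpace.inner_single_left]
  simp

def gradSpan (s : Finset (Fin 7)) (x : EuclideanSpace ℝ (Fin 4)) :
    Submodule ℝ (EuclideanSpace ℝ (Fin 4)) :=
  Submodule.span ℝ ((fun i => gradient (qEx i) x) '' ↑s)

theorem gradient_mem_gradSpan {s : Finset (Fin 7)} {i : Fin 7} (hi : i ∈ s)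
    (x : EuclideanSpace ℝ (Fin 4)) : gradient (qEx i) x ∈ gradSpan s x :=
  Submodule.subset_span ⟨i, hi, rfl⟩

theorem gradSpan_sup_eq (s : Finset (Fin 7)) (x y : EuclideanSpace ℝ (Fin 4)) :
    gradSpan s x ⊔ ℝ ∙ e₂ = gradSpan s y ⊔ ℝ ∙ e₂ :=
  Submodule.span_image_sup_span_singleton_eq fun i _ => Submodule.mem_span_singleton.2
    ⟨2 * qQuad i * (x 1 - y 1), by rw [gradient_qEx, gradient_qEx]; module⟩

theorem rankAt_qEx_eq_of_mem_iff {s : Finset (Fin 7)} {x y : EuclideanSpace ℝ (Fin 4)}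
    (h : e₂ ∈ gradSpan s x ↔ e₂ ∈ gradSpan s y) : RankAt qEx s x = RankAt qEx s y :=
  Submodule.finrank_eq_of_sup_span_singleton_eq (gradSpan_sup_eq s x y) h

theorem rankAt_qEx_eq_add_one {s : Finset (Fin 7)} {x y : EuclideanSpace ℝ (Fin 4)}
    (hx : e₂ ∉ gradSpan s x) (hy : e₂ ∈ gradSpan s y) : RankAt qEx s y = RankAt qEx s x + 1 :=
  Submodule.finrank_eq_add_one_of_sup_span_singleton_eq (gradSpan_sup_eq s x y) hx hy

theorem single_mem_gradSpan_of_smul_eq {s : Finset (Fin 7)} {x : EuclideanSpace ℝ (Fin 4)}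
    {i j k : Fin 7} (hi : i ∈ s) (hj : j ∈ s) (hk : k ∈ s) {a b c d : ℝ} (hd : d ≠ 0)
    (h : d • e₂ = a • gradient (qEx i) x + b • gradient (qEx j) x + c • gradient (qEx k) x) :
    e₂ ∈ gradSpan s x := by
  refine (Submodule.smul_mem_iff _ hd).1 ?_
  rw [h]
  exact add_mem (add_mem (Submodule.smul_mem _ _ (gradient_mem_gradSpan hi x))
    (Submodule.smul_mem _ _ (gradient_mem_gradSpan hj x)))
    (Submodule.smul_mem _ _ (gradient_mem_gradSpan hk x))

theorem rankAt_ne_rankAt_zero_of_apply_ne_zero {x : EuclideanSpace ℝ (Fin 4)} (hx : x 1 ≠ 0) :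
    RankAt qEx {4, 5} x ≠ RankAt qEx {4, 5} 0 := by
  have h4 : (4 : Fin 7) ∈ ({4, 5} : Finset (Fin 7)) := by simp
  have h5 : (5 : Fin 7) ∈ ({4, 5} : Finset (Fin 7)) := by simp
  have hmem : e₂ ∈ gradSpan {4, 5} x := by
    refine single_mem_gradSpan_of_smul_eq h4 h4 h5 (a := 1) (b := 0) (c := -1) (d := 2 * x 1)
      (mul_ne_zero two_ne_zero hx) ?_
    ext j; fin_cases j <;> simp [gradient_qEx, qLin, qQuad]
  have hnotMem : e₂ ∉ gradSpan {4, 5} 0 := by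
    intro h
    simp only [gradSpan, Finset.coe_insert, Finset.coe_singleton, Set.image_insert_eq,
      Set.image_singleton] at h
    obtain ⟨a, b, hab⟩ := Submodule.mem_span_pair.1 h
    simpa [gradient_qEx, qLin, qQuad] using congrArg (· 1) hab
  rw [rankAt_qEx_eq_add_one hnotMem hmem]
  exact Nat.succ_ne_self _

set_option maxRecDepth 10000 in
theorem subset_singleton_or_of_subset {J : Finset (Fin 7)} (hJ : J ⊆ {0, 1, 2, 3, 4, 5}) :
    (∃ i ∈ ({0, 1, 2, 3} : Finset (Fin 7)), J ⊆ {i}) ∨ 4 ∈ J ∨ 5 ∈ J ∨ (0 ∈ J ∧ 1 ∈ J) ∨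
      (2 ∈ J ∧ 3 ∈ J) ∨
      ∃ a ∈ ({0, 1} : Finset (Fin 7)), ∃ b ∈ ({2, 3} : Finset (Fin 7)), a ∈ J ∧ b ∈ J := by
  revert J
  decide

theorem single_notMem_gradSpan {J : Finset (Fin 7)} {i : Fin 7}
    (hi : i ∈ ({0, 1, 2, 3} : Finset (Fin 7))) (hJ : J ⊆ {i}) (x : EuclideanSpace ℝ (Fin 4)) :
    e₂ ∉ gradSpan ({6} ∪ J) x := by
  have hle : gradSpan ({6} ∪ J) x ≤
      Submodule.span ℝ {gradient (qEx 6) x, gradient (qEx i) x} := by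
    refine Submodule.span_mono ?_
    rintro _ ⟨j, hj, rfl⟩
    rcases Finset.mem_union.1 hj with hj | hj
    · simp_all
    · simp [Finset.mem_singleton.1 (hJ hj)]
  intro h
  obtain ⟨a, b, hab⟩ := Submodule.mem_span_pair.1 (hle h)
  have h0 := congrArg (· 0) hab
  have h1 := congrArg (· 1) hab
  have h2 := congrArg (· 2) hab
  fin_cases hi <;> simp [gradient_qEx, qLin, qQuad] at h0 h1 h2 <;> simp_all

theorem single_mem_gradSpan {J : Finset (Fin 7)} (hJ : J ⊆ {0, 1, 2, 3, 4, 5})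
    (hJ' : ¬∃ i ∈ ({0, 1, 2, 3} : Finset (Fin 7)), J ⊆ {i}) {x : EuclideanSpace ℝ (Fin 4)}
    (hx : |x 1| < 1 / 4) : e₂ ∈ gradSpan ({6} ∪ J) x := by
  obtain ⟨hx₁, hx₂⟩ := abs_lt.1 hx
  have h6 : (6 : Fin 7) ∈ {6} ∪ J := by simp
  have hmem {i : Fin 7} (hi : i ∈ J) : i ∈ {6} ∪ J := Finset.mem_union_right _ hi
  rcases (subset_singleton_or_of_subset hJ).resolve_left hJ' with
    h4 | h5 | ⟨h0, h1⟩ | ⟨h2, h3⟩ | ⟨a, ha, b, hb, haJ, hbJ⟩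
  · refine single_mem_gradSpan_of_smul_eq h6 (hmem h4) h6 (a := 1) (b := -1) (c := 0)
      one_ne_zero ?_
    ext j; fin_cases j <;> simp [gradient_qEx, qLin, qQuad]
  · refine single_mem_gradSpan_of_smul_eq h6 (hmem h5) h6 (a := 1) (b := -1) (c := 0)
      (d := 1 + 2 * x 1) (by linarith) ?_
    ext j; fin_cases j <;> simp [gradient_qEx, qLin, qQuad]
  · refine single_mem_gradSpan_of_smul_eq h6 (hmem h0) (hmem h1)
      (a := 1) (b := 1 / 2) (c := -1 / 2) (d := 1 + 2 * x 1) (by linarith) ?_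
    ext j; fin_cases j <;> simp [gradient_qEx, qLin, qQuad] <;> ring
  · refine single_mem_gradSpan_of_smul_eq h6 (hmem h2) (hmem h3)
      (a := 0) (b := 1) (c := -1) (d := 2) two_ne_zero ?_
    ext j; fin_cases j <;> simp [gradient_qEx, qLin, qQuad, one_add_one_eq_two]
  · -- `qLin a = σ e₁ - e₃` and `qLin b = τ e₂ - 2 e₃` with `σ, τ = ±1`, so
    -- `2σ ∇q₇(x) + 2 ∇q_a - ∇q_b = (2σ (1 + 2 x₂) - τ) e₂`, and `|2σ (1 + 2 x₂)| > 1`.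
    refine single_mem_gradSpan_of_smul_eq h6 (hmem haJ) (hmem hbJ) (a := 2 * qLin a 0) (b := 2)
      (c := -1) (d := 2 * qLin a 0 * (1 + 2 * x 1) - qLin b 1) ?_ ?_
    · fin_cases ha <;> fin_cases hb <;> simp [qLin] <;> linarith
    · fin_cases ha <;> fin_cases hb <;> ext j <;> fin_cases j <;>
        simp [gradient_qEx, qLin, qQuad] <;> ring

theorem single_mem_gradSpan_iff {J : Finset (Fin 7)} (hJ : J ⊆ {0, 1, 2, 3, 4, 5})
    {x : EuclideanSpace ℝ (Fin 4)} (hx : |x 1| < 1 / 4) :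
    e₂ ∈ gradSpan ({6} ∪ J) x ↔ ¬∃ i ∈ ({0, 1, 2, 3} : Finset (Fin 7)), J ⊆ {i} :=
  ⟨fun h ⟨_, hi, hJi⟩ => single_notMem_gradSpan hi hJi x h, fun h => single_mem_gradSpan hJ h hx⟩

end Example41

/-- **Example 4.1 (constraint-qualification claims).** At `x̄ = 0`, CRCQ fails but RCRCQ
holds. -/
theorem example41_constraint_qualifications :
    (0 : EuclideanSpace ℝ (Fin 4)) ∈
        Feas ({6} : Finset (Fin 7)) ({0, 1, 2, 3, 4, 5} : Finset (Fin 7)) qEx ∧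
    ¬ CRCQat ({6} : Finset (Fin 7)) ({0, 1, 2, 3, 4, 5} : Finset (Fin 7)) qEx 0 ∧
    RCRCQat ({6} : Finset (Fin 7)) ({0, 1, 2, 3, 4, 5} : Finset (Fin 7)) qEx 0 := by
  refine ⟨by simp [Feas, qEx], ?_, ?_⟩
  · have hJ : ({4, 5} : Finset (Fin 7)) ⊆ ActiveI {0, 1, 2, 3, 4, 5} qEx 0 := by
      intro i hi
      fin_cases hi <;> simp [ActiveI, qEx]
    refine not_crcqAt_of_frequently_rankAt_ne (Finset.empty_subset _) hJ ?_
    exact (EuclideanSpace.frequently_apply_ne_zero 1).mono fun x hx => by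
      simpa using Example41.rankAt_ne_rankAt_zero_of_apply_ne_zero hx
  · refine ⟨Metric.ball 0 (1 / 4), Metric.ball_mem_nhds _ (by norm_num), fun J hJ x hx y hy => ?_⟩
    have hJ' : J ⊆ {0, 1, 2, 3, 4, 5} := hJ.trans (Finset.filter_subset _ _)
    have hcoord {z : EuclideanSpace ℝ (Fin 4)} (hz : z ∈ Metric.ball 0 (1 / 4)) :
        |z 1| < 1 / 4 :=
      (PiLp.norm_apply_le z 1).trans_lt (mem_ball_zero_iff.1 hz)
    exact Example41.rankAt_qEx_eq_of_mem_iff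
      ((Example41.single_mem_gradSpan_iff hJ' (hcoord hx)).trans
        (Example41.single_mem_gradSpan_iff hJ' (hcoord hy)).symm)
end
end

section
/- (Example 4.1, tilt-stability claims) In ℝ⁴ with x = (x₁, x₂, x₃, x₄), let φ(x) = (1/4)x₁ − x₁x₂ + x₃ + x₃² + (1/2)x₄², and let Γ := {x ∈ ℝ⁴ : x₁ − x₃ ≤ 0, −x₁ − x₃ ≤ 0, x₂ − 2x₃ ≤ 0, −x₂ − 2x₃ ≤ 0, −x₁ + x₂² ≤ 0, −x₁ ≤ 0, −x₁ + x₂² + x₂ = 0}. Then x̄ := (0,0,0,0) is a stationary point and a tilt-stable local minimizer of the NLP: minimize φ(x) subject to x ∈ Γ, and the exact bound of tilt stability equals 1, i.e. tilt(φ, q, x̄) = 1. -/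
open Filter Topology Metric Set
open scoped RealInnerProductSpace

noncomputable section

variable {n : ℕ} {ι : Type*} [Fintype ι] [DecidableEq ι]

/-- The objective of Example 4.1. -/
def φEx : EuclideanSpace ℝ (Fin 4) → ℝ :=
  fun x => (1 / 4) * x 0 - x 0 * x 1 + x 2 + x 2 ^ 2 + (1 / 2) * x 3 ^ 2
/-! On `Γ` the constraints force `x₁ = x₂² + x₂`, `x₂ ≥ 0` and `x₃ ≥ x₁` (paper indices; the
code counts coordinates from `0`). For `‖v‖ ≤ 1/4` the tilted objective `φ - ⟪v, ·⟫` exceeds its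
value at `(0, 0, 0, v₄)` by at least `(x₄ - v₄)²/2 + (3/4)(x₃ - x₁) + x₂/2`, so for every radius
`γ ≥ ‖v‖` the localized tilted problem has the unique solution `(0, 0, 0, v₄)`. This solution
map is `1`-Lipschitz, and it is the identity on the `x₄`-axis, so no smaller modulus works.
Stationarity holds with the multiplier `λ = (1/2, 1/2, 0, 0, 0, 1/4, 0)`. -/

section TiltStability

variable {φ : EuclideanSpace ℝ (Fin n) → ℝ} {Γ : Set (EuclideanSpace ℝ (Fin n))}
  {xbar : EuclideanSpace ℝ (Fin n)} {γ κ : ℝ}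

lemma mArgmin_eq_singleton {v m : EuclideanSpace ℝ (Fin n)}
    (hm : m ∈ Γ ∩ closedBall xbar γ)
    (hlt : ∀ y ∈ Γ ∩ closedBall xbar γ, y ≠ m → φ m - ⟪v, m⟫ < φ y - ⟪v, y⟫) :
    MArgmin φ Γ xbar γ v = {m} := by
  ext x
  refine ⟨fun ⟨hx, hxmin⟩ => ?_, ?_⟩
  · by_contra hne
    exact (hxmin m hm).not_gt (hlt x hx hne)
  · rintro rfl
    exact ⟨hm, fun y hy => by
      rcases eq_or_ne y x with rfl | hne
      exacts [le_rfl, (hlt y hy hne).le]⟩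

lemma tiltStableWith_of_eventually {s : EuclideanSpace ℝ (Fin n) → EuclideanSpace ℝ (Fin n)}
    (hγ : 0 < γ) (hs : ∀ᶠ v in 𝓝 0, MArgmin φ Γ xbar γ v = {s v}) (hs0 : s 0 = xbar)
    (hlip : ∀ v w, ‖s v - s w‖ ≤ κ * ‖v - w‖) :
    TiltStableWith φ Γ xbar κ :=
  ⟨γ, hγ, _, hs, s, hs0, fun _ hv => hv, fun v _ w _ => hlip v w⟩

lemma TiltStableWith.eventually_norm_sub_le (h : TiltStableWith φ Γ xbar κ)
    {s : EuclideanSpace ℝ (Fin n) → EuclideanSpace ℝ (Fin n)}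
    (hs : ∀ γ > 0, ∀ᶠ v in 𝓝 0, MArgmin φ Γ xbar γ v = {s v}) :
    ∀ᶠ v in 𝓝 0, ‖s v - xbar‖ ≤ κ * ‖v‖ := by
  obtain ⟨γ, hγ, W, hW, m, hm0, hmW, hlip⟩ := h
  filter_upwards [hW, hs γ hγ] with v hvW hv
  have hmv : m v = s v := singleton_eq_singleton_iff.mp ((hmW v hvW).symm.trans hv)
  simpa [hmv, hm0] using hlip v hvW 0 (mem_of_mem_nhds hW)

end TiltStability

lemma gradient_eq_of_hasFDerivAt {F : Type*} [NormedAddCommGroup F] [InnerProductSpace ℝ F]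
    [CompleteSpace F] {f : F → ℝ} {L : F →L[ℝ] ℝ} {x c : F} (h : HasFDerivAt f L x)
    (hc : ∀ y, L y = ⟪c, y⟫) : gradient f x = c :=
  (hasGradientAt_iff_hasFDerivAt.2 (h.congr_fderiv (ContinuousLinearMap.ext fun y => by
    simp [hc]))).gradient

lemma hasFDerivAt_euclideanSpace_apply {ι : Type*} [Fintype ι] (i : ι) (x : EuclideanSpace ℝ ι) :
    HasFDerivAt (fun y : EuclideanSpace ℝ ι => y i)
      (EuclideanSpace.proj i : EuclideanSpace ℝ ι →L[ℝ] ℝ) x :=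
  (EuclideanSpace.proj i : EuclideanSpace ℝ ι →L[ℝ] ℝ).hasFDerivAt

local notation "E4" => EuclideanSpace ℝ (Fin 4)

abbrev ΓEx : Set E4 := Feas ({6} : Finset (Fin 7)) ({0, 1, 2, 3, 4, 5} : Finset (Fin 7)) qEx

lemma qEx_zero (i : Fin 7) : qEx i 0 = 0 := by
  fin_cases i <;> simp [qEx]

lemma zero_mem_ΓEx : (0 : E4) ∈ ΓEx :=
  ⟨fun i _ => qEx_zero i, fun i _ => (qEx_zero i).le⟩

lemma gradient_φEx_zero : gradient φEx 0 = !₂[1/4, 0, 1, 0] := by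
  have hp (i : Fin 4) := hasFDerivAt_euclideanSpace_apply i (0 : E4)
  have hφ := ((((hp 0).const_mul (1/4)).sub ((hp 0).mul (hp 1))).add (hp 2)).add
    ((hp 2).pow 2) |>.add (((hp 3).pow 2).const_mul (1/2))
  refine gradient_eq_of_hasFDerivAt hφ fun y => ?_
  simp [PiLp.inner_apply, Fin.sum_univ_four]
  ring

def lamEx : EuclideanSpace ℝ (Fin 7) := !₂[1/2, 1/2, 0, 0, 0, 1/4, 0]

lemma lamEx_mem_mult :
    lamEx ∈ Mult ({0, 1, 2, 3, 4, 5} : Finset (Fin 7)) qEx 0 (-gradient φEx 0) := by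
  have hp (i : Fin 4) := hasFDerivAt_euclideanSpace_apply i (0 : E4)
  have g0 : gradient (qEx 0) 0 = !₂[1, 0, -1, 0] :=
    gradient_eq_of_hasFDerivAt ((hp 0).sub (hp 2)) fun y => by
      simp [PiLp.inner_apply, Fin.sum_univ_four]; ring
  have g1 : gradient (qEx 1) 0 = !₂[-1, 0, -1, 0] :=
    gradient_eq_of_hasFDerivAt ((hp 0).neg.sub (hp 2)) fun y => by
      simp [PiLp.inner_apply, Fin.sum_univ_four]; ring
  have g5 : gradient (qEx 5) 0 = !₂[-1, 0, 0, 0] :=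
    gradient_eq_of_hasFDerivAt (hp 0).neg fun y => by
      simp [PiLp.inner_apply, Fin.sum_univ_four]
  refine ⟨?_, fun i _ => ⟨?_, by rw [qEx_zero, mul_zero]⟩⟩
  · simp [Fin.sum_univ_seven, lamEx, g0, g1, g5, gradient_φEx_zero]
    ext i
    fin_cases i <;> norm_num
  · fin_cases i <;> simp [lamEx]

lemma ΓEx_bounds {x : E4} (hx : x ∈ ΓEx) : 0 ≤ x 1 ∧ x 0 = x 1 ^ 2 + x 1 ∧ x 0 ≤ x 2 := by
  have h7 : -x 0 + x 1 ^ 2 + x 1 = 0 := hx.1 6 (by decide)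
  have h5 : -x 0 + x 1 ^ 2 ≤ 0 := hx.2 4 (by decide)
  have h1 : x 0 - x 2 ≤ 0 := hx.2 0 (by decide)
  exact ⟨by linarith, by linarith, by linarith⟩

def argminEx (v : E4) : E4 := EuclideanSpace.single 3 (v 3)

lemma argminEx_mem_ΓEx (v : E4) : argminEx v ∈ ΓEx :=
  ⟨fun i hi => by fin_cases hi; simp [argminEx, qEx],
   fun i hi => by fin_cases hi <;> simp [argminEx, qEx]⟩

lemma norm_argminEx_sub_le (v w : E4) : ‖argminEx v - argminEx w‖ ≤ 1 * ‖v - w‖ := by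
  rw [argminEx, argminEx, ← PiLp.single_sub, PiLp.norm_single, one_mul]
  exact PiLp.norm_apply_le (v - w) 3

lemma tilted_argminEx (v : E4) : φEx (argminEx v) - ⟪v, argminEx v⟫ = -v 3 ^ 2 / 2 := by
  simp [argminEx, φEx, EuclideanSpace.inner_single_right]
  ring

-- The gap is `(1/4 - v 2) * y 2 + (y 2 ^ 2 - y 0 ^ 2)`, nonnegative as `y 2 ≥ y 0 ≥ 0`,
-- plus, after substituting `y 0 = y 1 ^ 2 + y 1`, a polynomial in `y 1 ≥ 0` with
-- nonnegative coefficients.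
lemma tilted_growth {v y : E4} (hv : ‖v‖ ≤ 1/4) (hy : y ∈ ΓEx) :
    φEx (argminEx v) - ⟪v, argminEx v⟫ + ((y 3 - v 3) ^ 2 / 2 + 3/4 * (y 2 - y 0) + y 1 / 2)
      ≤ φEx y - ⟪v, y⟫ := by
  obtain ⟨hy1, hy0, hy2⟩ := ΓEx_bounds hy
  have hv0 := abs_le.1 ((PiLp.norm_apply_le v 0).trans hv)
  have hv1 := abs_le.1 ((PiLp.norm_apply_le v 1).trans hv)
  have hv2 := abs_le.1 ((PiLp.norm_apply_le v 2).trans hv)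
  rw [tilted_argminEx]
  simp only [φEx, PiLp.inner_apply, RCLike.inner_apply, conj_trivial, Fin.sum_univ_four]
  nlinarith [mul_nonneg (sub_nonneg.2 hy2) (by nlinarith : (0:ℝ) ≤ 1/4 + y 2 + y 0 - v 2),
    mul_nonneg hy1 (sq_nonneg (y 1)), sq_nonneg (y 1)]

lemma eq_argminEx_of_tilted_le {v y : E4} (hv : ‖v‖ ≤ 1/4) (hy : y ∈ ΓEx)
    (hle : φEx y - ⟪v, y⟫ ≤ φEx (argminEx v) - ⟪v, argminEx v⟫) : y = argminEx v := by
  have hgrowth := tilted_growth hv hy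
  obtain ⟨hy1, hy0, hy2⟩ := ΓEx_bounds hy
  have e3 : y 3 = v 3 := by nlinarith [sq_nonneg (y 3 - v 3)]
  have e1 : y 1 = 0 := by nlinarith [sq_nonneg (y 3 - v 3)]
  have e0 : y 0 = 0 := by rw [hy0, e1]; ring
  have e2 : y 2 = 0 := by nlinarith [sq_nonneg (y 3 - v 3)]
  ext i
  fin_cases i <;> simp [argminEx, e0, e1, e2, e3]

lemma mArgmin_φEx {v : E4} {γ : ℝ} (hv : ‖v‖ ≤ 1/4) (hvγ : ‖v‖ ≤ γ) :
    MArgmin φEx ΓEx 0 γ v = {argminEx v} := by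
  refine mArgmin_eq_singleton ⟨argminEx_mem_ΓEx v, ?_⟩ fun y hy hne => ?_
  · rw [mem_closedBall_zero_iff, argminEx, PiLp.norm_single]
    exact (PiLp.norm_apply_le v 3).trans hvγ
  · exact lt_of_not_ge fun hle => hne (eq_argminEx_of_tilted_le hv hy.1 hle)

lemma eventually_mArgmin_φEx {γ : ℝ} (hγ : 0 < γ) :
    ∀ᶠ v in 𝓝 (0 : E4), MArgmin φEx ΓEx 0 γ v = {argminEx v} := by
  filter_upwards [closedBall_mem_nhds (0 : E4) (lt_min hγ (by norm_num : (0:ℝ) < 1/4))] with v hv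
  rw [mem_closedBall_zero_iff, le_min_iff] at hv
  exact mArgmin_φEx hv.2 hv.1

lemma tiltStableWith_φEx_one : TiltStableWith φEx ΓEx 0 1 :=
  tiltStableWith_of_eventually one_pos (eventually_mArgmin_φEx one_pos)
    (by simp [argminEx]) norm_argminEx_sub_le

lemma one_le_of_tiltStableWith_φEx {κ : ℝ} (h : TiltStableWith φEx ΓEx 0 κ) : 1 ≤ κ := by
  have hlip := h.eventually_norm_sub_le fun γ hγ => eventually_mArgmin_φEx hγ
  have hline : Tendsto (fun t : ℝ => EuclideanSpace.single (3 : Fin 4) t) (𝓝[>] 0) (𝓝 0) := by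
    rw [tendsto_zero_iff_norm_tendsto_zero]
    simpa only [PiLp.norm_single] using tendsto_norm_zero.mono_left nhdsWithin_le_nhds
  obtain ⟨t, ht, ht0⟩ := ((hline.eventually hlip).and self_mem_nhdsWithin).exists
  simp only [argminEx, PiLp.single_eq_same, sub_zero, PiLp.norm_single, Real.norm_eq_abs,
    abs_of_pos ht0] at ht
  nlinarith

/-- **Example 4.1 (tilt-stability claims).** `x̄ = 0` is a stationary point and a tilt-stable
local minimizer of (NLP1), with exact bound of tilt stability equal to `1`. -/
theorem example41_tilt_stability :
    (0 : EuclideanSpace ℝ (Fin 4)) ∈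
        Feas ({6} : Finset (Fin 7)) ({0, 1, 2, 3, 4, 5} : Finset (Fin 7)) qEx ∧
    (Mult ({0, 1, 2, 3, 4, 5} : Finset (Fin 7)) qEx 0 (-gradient φEx 0)).Nonempty ∧
    TiltStable φEx (Feas ({6} : Finset (Fin 7)) ({0, 1, 2, 3, 4, 5} : Finset (Fin 7)) qEx) 0 ∧
    TiltBound φEx (Feas ({6} : Finset (Fin 7)) ({0, 1, 2, 3, 4, 5} : Finset (Fin 7)) qEx) 0
      = 1 :=
  ⟨zero_mem_ΓEx, ⟨lamEx, lamEx_mem_mult⟩, ⟨1, one_pos, tiltStableWith_φEx_one⟩,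
    IsLeast.csInf_eq ⟨⟨one_pos, tiltStableWith_φEx_one⟩,
      fun _ hκ => one_le_of_tiltStableWith_φEx hκ.2⟩⟩

end
end
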